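/- arXiv:math/9507219 — 12 statements merged into one kernel-verified Lean document; each statement's English description precedes it below -/
import Mathlib

section
/- If H is an n×n sign pattern and there exist distinct row indices i and j such that exactly one of the signed row overlap numbers N(H)⁺_{ij} and N(H)⁻_{ij} is zero and the other is nonzero, then there do not exist real matrices A, D with sign pattern H satisfying AᵀD = I. -/
open Matrix

/-- `c` traces a directed cycle of length `m+1` in the digraph `R`:
distinct vertices, consecutive arcs (indices wrap around in `Fin (m+1)`). -/
def DicycleOn {V : Type*} {m : ℕ} (R : V → V → Prop) (c : Fin (m+1) → V) : Prop :=
  Function.Injective c ∧ ∀ i, R (c i) (c (i+1))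

/-- A digraph is noneven if some 0,1-weighting (valued in `ZMod 2`) of its arcs makes
every directed cycle have odd total weight. -/
def IsNoneven {V : Type*} (R : V → V → Prop) : Prop :=
  ∃ w : V → V → ZMod 2, ∀ (m : ℕ) (c : Fin (m+1) → V),
    DicycleOn R c → ∑ i, w (c i) (c (i+1)) = 1

/-- A digraph is even if every 0,1-weighting of its arcs admits a directed cycle
of even total weight. -/
def IsEvenDigraph {V : Type*} (R : V → V → Prop) : Prop :=
  ∀ w : V → V → ZMod 2, ∃ (m : ℕ) (c : Fin (m+1) → V),
    DicycleOn R c ∧ ∑ i, w (c i) (c (i+1)) = 0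

def StronglyConnected {V : Type*} (R : V → V → Prop) : Prop :=
  ∀ u v, Relation.ReflTransGen R u v

/-- Removing any single vertex leaves a strongly connected digraph. -/
def StronglyTwoConnected {V : Type*} (R : V → V → Prop) : Prop :=
  ∀ x : V, StronglyConnected (fun a b : {y : V // y ≠ x} => R a b)

def SemiComplete {V : Type*} (R : V → V → Prop) : Prop :=
  ∀ u v : V, u ≠ v → R u v ∨ R v u

/-- The digraph W₄: double arcs 0↔1 and 2↔3, single arcs 0→2, 2→1, 1→3, 3→0
(the unique 2-connected semi-complete noneven digraph on 4 vertices; every vertex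
has indegree 2 and outdegree 2 and there are 8 arcs). -/
def W4 : Fin 4 → Fin 4 → Prop := fun u v =>
  (u = 0 ∧ v = 1) ∨ (u = 1 ∧ v = 0) ∨ (u = 2 ∧ v = 3) ∨ (u = 3 ∧ v = 2) ∨
  (u = 0 ∧ v = 2) ∨ (u = 2 ∧ v = 1) ∨ (u = 1 ∧ v = 3) ∨ (u = 3 ∧ v = 0)

/-- The symmetric double 4-cycle C₄*. -/
def C4star : Fin 4 → Fin 4 → Prop := fun u v => v = u + 1 ∨ u = v + 1

def DigraphIso {V W : Type*} (R : V → V → Prop) (S : W → W → Prop) : Prop :=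
  ∃ e : V ≃ W, ∀ u v, R u v ↔ S (e u) (e v)

/-- A sign pattern: entries in {-1, 0, 1}. -/
def IsSignPattern {I : Type*} (H : Matrix I I ℝ) : Prop :=
  ∀ i j, H i j = -1 ∨ H i j = 0 ∨ H i j = 1

/-- `A ∈ Q(H)`: the matrix `A` has sign pattern `H`. -/
def HasSignPattern {I : Type*} (A H : Matrix I I ℝ) : Prop :=
  ∀ i j, Real.sign (A i j) = H i j

/-- `Q(H)` contains a symplectic pair `(A, D)` with `Aᵀ D = I`. -/
def AllowsSymplecticPairs {I : Type*} [Fintype I] [DecidableEq I] (H : Matrix I I ℝ) : Prop :=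
  ∃ A D : Matrix I I ℝ, HasSignPattern A H ∧ HasSignPattern D H ∧ Aᵀ * D = 1

def IsSignNonsingular {I : Type*} [Fintype I] [DecidableEq I] (H : Matrix I I ℝ) : Prop :=
  ∀ A : Matrix I I ℝ, HasSignPattern A H → A.det ≠ 0

def NegativeDiagonal {I : Type*} (H : Matrix I I ℝ) : Prop := ∀ i, H i i = -1

/-- The (unweighted) digraph of the pattern `H` is `R`: an arc `(i,j)`, `i ≠ j`,
exactly for the off-diagonal nonzero entries. -/
def PatternDigraph {I : Type*} (H : Matrix I I ℝ) (R : I → I → Prop) : Prop :=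
  ∀ i j, i ≠ j → (H i j ≠ 0 ↔ R i j)

/-- An unweighted digraph allows symplectic pairs if some negative-diagonal sign
pattern whose digraph is `R` allows symplectic pairs. -/
def DigraphAllowsSymplecticPairs {V : Type*} [Fintype V] [DecidableEq V]
    (R : V → V → Prop) : Prop :=
  ∃ H : Matrix V V ℝ, IsSignPattern H ∧ NegativeDiagonal H ∧
    PatternDigraph H R ∧ AllowsSymplecticPairs H

/-- Tree edges of the caterpillar tree underlying an extended caterpillar:
consecutive backbone vertices, and blossom vertices joined to their backbone vertex.
`pos` is the blossom (backbone) index of a vertex, `bb j` the backbone vertex of index `j`. -/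
def CaterpillarTreeEdge {n : ℕ} (pos : Fin n → ℕ) (bb : ℕ → Fin n) (u v : Fin n) : Prop :=
  u ≠ v ∧ ((u = bb (pos u) ∧ v = bb (pos v) ∧ (pos v = pos u + 1 ∨ pos u = pos v + 1)) ∨
           (pos u = pos v ∧ (u = bb (pos u) ∨ v = bb (pos v))))

/-- `R` is an extended caterpillar on `Fin n`, where the natural order of `Fin n`
is the backbone-induced total order: there are `k` blossoms (`pos` monotone, surjective
onto `{0, …, k-1}` with backbone vertices `bb j`); the first and last blossoms are
trivial (no blossom vertices at the ends of the backbone); and the arcs are: one arc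
`u → v` for every pair `v < u`, together with both arcs of every tree edge. -/
def IsExtendedCaterpillar {n : ℕ} (R : Fin n → Fin n → Prop) : Prop :=
  ∃ (k : ℕ) (pos : Fin n → ℕ) (bb : ℕ → Fin n),
    0 < k ∧ Monotone pos ∧ (∀ v, pos v < k) ∧ (∀ j, j < k → pos (bb j) = j) ∧
    (∀ v, pos v = 0 → v = bb 0) ∧ (∀ v, pos v = k - 1 → v = bb (k - 1)) ∧
    (∀ u v, R u v ↔ (v < u ∨ (u < v ∧ CaterpillarTreeEdge pos bb u v)))

/-- Digraphs obtainable from the symmetric double cycle `C_k*` by subdividing arcs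
and splitting vertices (the weak k-double-cycles). -/
inductive WeakDoubleCycle : (k : ℕ) → (V : Type) → (V → V → Prop) → Prop where
  | base (m : ℕ) : WeakDoubleCycle (m+1) (Fin (m+1)) (fun u v => v = u + 1 ∨ u = v + 1)
  | subdivide {k : ℕ} {V : Type} {R : V → V → Prop} (a b : V) (hab : R a b)
      (h : WeakDoubleCycle k V R) :
      WeakDoubleCycle k (Option V) (fun x y =>
        (x = some a ∧ y = none) ∨ (x = none ∧ y = some b) ∨
        (∃ u v, x = some u ∧ y = some v ∧ R u v ∧ ¬(u = a ∧ v = b)))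
  | split {k : ℕ} {V : Type} {R : V → V → Prop} (a : V) (h : WeakDoubleCycle k V R) :
      WeakDoubleCycle k (Option V) (fun x y =>
        (x = some a ∧ y = none) ∨
        (∃ v, x = none ∧ y = some v ∧ R a v) ∨
        (∃ u v, x = some u ∧ y = some v ∧ R u v ∧ u ≠ a))

/-- C₄-cockades: start with the 4-cycle; repeatedly pick an edge `(u,v)`, add two new
vertices `u', v'` and the edges `(u,u')`, `(u',v')`, `(v',v)`. -/
inductive IsC4Cockade : (V : Type) → SimpleGraph V → Prop where
  | base : IsC4Cockade (Fin 4) (SimpleGraph.fromRel (fun u v => v = u + 1))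
  | attach {V : Type} {G : SimpleGraph V} (u v : V) (huv : G.Adj u v)
      (h : IsC4Cockade V G) :
      IsC4Cockade (V ⊕ Fin 2)
        (SimpleGraph.fromRel (fun x y =>
          (∃ a b, x = Sum.inl a ∧ y = Sum.inl b ∧ G.Adj a b) ∨
          (x = Sum.inl u ∧ y = Sum.inr 0) ∨ (x = Sum.inr 0 ∧ y = Sum.inr 1) ∨
          (x = Sum.inr 1 ∧ y = Sum.inl v)))

/-- `G` is 2-connected: connected, and removing any single vertex leaves it connected. -/
def GraphTwoConnected {V : Type*} (G : SimpleGraph V) : Prop :=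
  G.Connected ∧ ∀ v : V, (G.induce {u | u ≠ v}).Connected

lemma sign_mul_real (x y : ℝ) : Real.sign (x*y) = Real.sign x * Real.sign y := by
  rcases lt_trichotomy x 0 with hx|hx|hx
  · rcases lt_trichotomy y 0 with hy|hy|hy
    · rw [Real.sign_of_pos (mul_pos_of_neg_of_neg hx hy), Real.sign_of_neg hx,
        Real.sign_of_neg hy]; ring
    · simp [hy]
    · rw [Real.sign_of_neg (mul_neg_of_neg_of_pos hx hy), Real.sign_of_neg hx,
        Real.sign_of_pos hy]; ring
  · simp [hx]
  · rcases lt_trichotomy y 0 with hy|hy|hy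
    · rw [Real.sign_of_neg (mul_neg_of_pos_of_neg hx hy), Real.sign_of_pos hx,
        Real.sign_of_neg hy]; ring
    · simp [hy]
    · rw [Real.sign_of_pos (mul_pos hx hy), Real.sign_of_pos hx, Real.sign_of_pos hy]; ring

/-- if for some pair of distinct rows exactly one of the signed row
overlap numbers `N(H)⁺_{ij}`, `N(H)⁻_{ij}` vanishes, then `Q(H)` contains no
symplectic pair. -/
theorem stmt0 {n : ℕ} (H : Matrix (Fin n) (Fin n) ℝ) (hH : IsSignPattern H)
    (i j : Fin n) (hij : i ≠ j)
    (h : (Nat.card {k : Fin n // H i k * H j k > 0} = 0 ∧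
            Nat.card {k : Fin n // H i k * H j k < 0} ≠ 0) ∨
         (Nat.card {k : Fin n // H i k * H j k < 0} = 0 ∧
            Nat.card {k : Fin n // H i k * H j k > 0} ≠ 0)) :
    ¬ AllowsSymplecticPairs H := by
  rintro ⟨A, D, hA, hD, hAD⟩
  have hDA : D * Aᵀ = 1 := mul_eq_one_comm.mp hAD
  have hsum : ∑ k, D i k * A j k = 0 := by
    have := congrFun (congrFun hDA i) j
    simpa [Matrix.mul_apply, Matrix.transpose_apply, Matrix.one_apply_ne hij] using this
  have hsign : ∀ k, Real.sign (D i k * A j k) = H i k * H j k := fun k => by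
    rw [sign_mul_real, hD i k, hA j k]
  have key : ∀ (P N : Fin n → Prop), (∀ k, P k ↔ 0 < H i k * H j k) →
      (∀ k, N k ↔ H i k * H j k < 0) →
      (∀ k, ¬ P k) → (∃ k, N k) → False := by
    intro P N hP hN hnoP ⟨k0, hk0⟩
    have hle : ∀ k ∈ Finset.univ, D i k * A j k ≤ (0:ℝ) := by
      intro k _
      by_contra hc
      push_neg at hc
      have h1 : Real.sign (D i k * A j k) = 1 := Real.sign_of_pos hc
      exact hnoP k ((hP k).mpr (by rw [← hsign k, h1]; norm_num))
    have hlt : D i k0 * A j k0 < 0 := by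
      rcases lt_trichotomy (D i k0 * A j k0) 0 with h'|h'|h'
      · exact h'
      · exfalso
        have := hsign k0
        rw [h', Real.sign_zero] at this
        have := (hN k0).mp hk0
        linarith
      · exact absurd (hle k0 (Finset.mem_univ k0)) (not_le.mpr h')
    have : ∑ k, D i k * A j k < ∑ _k : Fin n, (0:ℝ) :=
      Finset.sum_lt_sum hle ⟨k0, Finset.mem_univ k0, hlt⟩
    simp only [Finset.sum_const, smul_zero] at this
    linarith [hsum, this]
  rcases h with ⟨h1, h2⟩ | ⟨h1, h2⟩
  · have hno : ∀ k, ¬ (0 < H i k * H j k) := by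
      intro k hk
      exact (Nat.card_ne_zero.mpr ⟨⟨⟨k, hk⟩⟩, inferInstance⟩) h1
    obtain ⟨⟨k0, hk0⟩⟩ := (Nat.card_ne_zero.mp h2).1
    exact key _ _ (fun k => Iff.rfl) (fun k => Iff.rfl) hno ⟨k0, hk0⟩
  · -- symmetric: negatives empty, positives nonempty; flip via negation
    have hsign' : ∀ k, Real.sign (-(D i k * A j k)) = -(H i k * H j k) := fun k => by
      rw [Real.sign_neg, hsign k]
    have hno : ∀ k, ¬ (0 < -(H i k * H j k)) := by
      intro k hk
      exact (Nat.card_ne_zero.mpr ⟨⟨⟨k, by linarith⟩⟩, inferInstance⟩) h1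
    obtain ⟨⟨k0, hk0⟩⟩ := (Nat.card_ne_zero.mp h2).1
    -- redo the argument with negated terms
    have hle : ∀ k ∈ Finset.univ, -(D i k * A j k) ≤ (0:ℝ) := by
      intro k _
      by_contra hc
      push_neg at hc
      have h1' : Real.sign (-(D i k * A j k)) = 1 := Real.sign_of_pos hc
      exact hno k (by rw [← hsign' k, h1']; norm_num)
    have hlt : -(D i k0 * A j k0) < 0 := by
      rcases lt_trichotomy (-(D i k0 * A j k0)) 0 with h'|h'|h'
      · exact h'
      · exfalso
        have h3 := hsign' k0
        rw [h', Real.sign_zero] at h3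
        linarith
      · exact absurd (hle k0 (Finset.mem_univ k0)) (not_le.mpr h')
    have : ∑ k, -(D i k * A j k) < ∑ _k : Fin n, (0:ℝ) :=
      Finset.sum_lt_sum hle ⟨k0, Finset.mem_univ k0, hlt⟩
    simp only [Finset.sum_const, smul_zero, Finset.sum_neg_distrib] at this
    linarith [hsum, this]
end

section
/- There exists a pair of real 4×4 matrices (A,D), both with sign pattern H = [[-1,-1,0,-1],[1,-1,-1,0],[0,1,-1,-1],[1,0,1,-1]], such that AᵀD = I; in fact one may choose A orthogonal with A = D. -/
open Matrix

/-- the given 4×4 pattern allows symplectic pairs, with an orthogonal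
choice `A = D`. -/
theorem stmt2 : ∃ A D : Matrix (Fin 4) (Fin 4) ℝ,
    HasSignPattern A (!![(-1 : ℝ), -1, 0, -1; 1, -1, -1, 0; 0, 1, -1, -1; 1, 0, 1, -1]) ∧
    HasSignPattern D (!![(-1 : ℝ), -1, 0, -1; 1, -1, -1, 0; 0, 1, -1, -1; 1, 0, 1, -1]) ∧
    Aᵀ * D = 1 ∧ A = D := by
  set t : ℝ := (Real.sqrt 3)⁻¹ with ht
  have hs : (0:ℝ) < Real.sqrt 3 := Real.sqrt_pos.mpr (by norm_num)
  have htpos : 0 < t := inv_pos.mpr hs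
  have htt : t * t = 1/3 := by
    rw [ht, ← mul_inv, Real.mul_self_sqrt (by norm_num : (0:ℝ) ≤ 3)]
    norm_num
  have hsgn : ∀ i j, Real.sign ((!![-t,-t,0,-t; t,-t,-t,0; 0,t,-t,-t; t,0,t,-t] :
      Matrix (Fin 4) (Fin 4) ℝ) i j) =
      (!![(-1 : ℝ), -1, 0, -1; 1, -1, -1, 0; 0, 1, -1, -1; 1, 0, 1, -1]) i j := by
    intro i j
    fin_cases i <;> fin_cases j <;>
      simp [Matrix.cons_val_zero, Matrix.cons_val_one, Matrix.cons_val_two, Matrix.cons_val_three, Matrix.head_cons, Matrix.tail_cons, Matrix.vecHead, Matrix.vecTail,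
        Real.sign_of_pos htpos, Real.sign_of_neg (neg_neg_iff_pos.mpr htpos), Real.sign_zero]
  refine ⟨!![-t,-t,0,-t; t,-t,-t,0; 0,t,-t,-t; t,0,t,-t],
          !![-t,-t,0,-t; t,-t,-t,0; 0,t,-t,-t; t,0,t,-t], hsgn, hsgn, ?_, rfl⟩
  have hT : (!![-t,-t,0,-t; t,-t,-t,0; 0,t,-t,-t; t,0,t,-t] : Matrix (Fin 4) (Fin 4) ℝ)ᵀ =
      !![-t,t,0,t; -t,-t,t,0; 0,-t,-t,t; -t,0,-t,-t] := by
    ext i j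
    fin_cases i <;> fin_cases j <;> rfl
  rw [hT]
  ext i j
  fin_cases i <;> fin_cases j <;>
    simp [Matrix.mul_apply, Fin.sum_univ_four, Matrix.one_apply,
      Matrix.cons_val_zero, Matrix.cons_val_one, Matrix.cons_val_two, Matrix.cons_val_three, Matrix.head_cons, Matrix.tail_cons, Matrix.vecHead, Matrix.vecTail] <;>
    linarith [htt]
end

section
/- Let G be a connected undirected graph with at least 3 vertices having a cut vertex v, and let G* be the symmetric digraph obtained by replacing each edge of G by arcs in both directions. Then no negative-diagonal sign pattern whose digraph is G* allows symplectic pairs. -/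
open Matrix

/-!
Let `a`, `b` be neighbours of the cut vertex `v` lying in different components of `G - v`.
The entry `(Aᵀ D)_{ab} = ∑ₖ A_{ka} D_{kb}` only has nonzero terms for `k` in the closed
neighbourhoods of both `a` and `b`; any such `k ≠ v` would join `a` to `b` in `G - v`. Hence the
entry is the single nonzero term `A_{va} D_{vb}`, while `Aᵀ D = 1` forces it to vanish.
-/

namespace SimpleGraph

variable {V : Type*} {G : SimpleGraph V} {v : V}

lemma Walk.exists_adj_reachable_induce_ne {u w : V} (p : G.Walk u w) (hu : u ≠ w) :
    ∃ a, ∃ h : G.Adj w a, (G.induce {x | x ≠ w}).Reachable ⟨u, hu⟩ ⟨a, h.ne'⟩ := by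
  induction p with
  | nil => exact absurd rfl hu
  | @cons u c w huc p ih =>
    by_cases hc : c = w
    · subst hc
      exact ⟨u, huc.symm, .rfl⟩
    · obtain ⟨a, hwa, hca⟩ := ih hc
      have huc' : (G.induce {x | x ≠ w}).Adj ⟨u, hu⟩ ⟨c, hc⟩ := induce_adj.mpr huc
      exact ⟨a, hwa, huc'.reachable.trans hca⟩

lemma Preconnected.exists_adj_not_reachable_induce_ne [Nontrivial V] (hG : G.Preconnected)
    (hcut : ¬ (G.induce {x | x ≠ v}).Connected) :
    ∃ a b, ∃ (ha : G.Adj v a) (hb : G.Adj v b),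
      ¬ (G.induce {x | x ≠ v}).Reachable ⟨a, ha.ne'⟩ ⟨b, hb.ne'⟩ := by
  by_contra! h
  obtain ⟨u, hu⟩ := exists_ne v
  refine hcut ((connected_iff _).mpr ⟨fun ⟨x, hx⟩ ⟨y, hy⟩ => ?_, ⟨⟨u, hu⟩⟩⟩)
  obtain ⟨a, ha, hxa⟩ := (hG x v).some.exists_adj_reachable_induce_ne hx
  obtain ⟨b, hb, hyb⟩ := (hG y v).some.exists_adj_reachable_induce_ne hy
  exact hxa.trans ((h a b ha hb).trans hyb.symm)

end SimpleGraph

lemma HasSignPattern.ne_zero_iff {I : Type*} {A H : Matrix I I ℝ} (hA : HasSignPattern A H)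
    {i j : I} : A i j ≠ 0 ↔ H i j ≠ 0 := by
  rw [← hA i j, Ne, Ne, Real.sign_eq_zero_iff]

lemma PatternDigraph.reachable_induce_of_ne_zero {V : Type*} {H : Matrix V V ℝ}
    {G : SimpleGraph V} (hH : PatternDigraph H (fun a b => G.Adj a b)) {s : Set V} {i j : V}
    (hi : i ∈ s) (hj : j ∈ s) (hij : H i j ≠ 0) : (G.induce s).Reachable ⟨i, hi⟩ ⟨j, hj⟩ := by
  by_cases h : i = j
  · subst h
    rfl
  · exact (SimpleGraph.induce_adj.mpr ((hH i j h).mp hij) :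
      (G.induce s).Adj ⟨i, hi⟩ ⟨j, hj⟩).reachable

lemma Matrix.transpose_mul_apply_eq_of_forall_ne {I J K R : Type*} [Fintype I]
    [NonUnitalNonAssocSemiring R] {A : Matrix I J R} {D : Matrix I K R} {a : J} {b : K} {v : I}
    (h : ∀ k ≠ v, A k a * D k b = 0) : (Aᵀ * D) a b = A v a * D v b :=
  Finset.sum_eq_single v (fun k _ hk => h k hk) (by simp)

theorem stmt3_general {n : ℕ} (hn : 3 ≤ n) (G : SimpleGraph (Fin n)) (hconn : G.Connected)
    (v : Fin n) (hcut : ¬ (G.induce {u | u ≠ v}).Connected)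
    (H : Matrix (Fin n) (Fin n) ℝ)
    (hdig : PatternDigraph H (fun a b => G.Adj a b)) :
    ¬ AllowsSymplecticPairs H := by
  rintro ⟨A, D, hA, hD, hAD⟩
  have : Nontrivial (Fin n) := Fin.nontrivial_iff_two_le.mpr (by omega)
  obtain ⟨a, b, hva, hvb, hab⟩ := hconn.preconnected.exists_adj_not_reachable_induce_ne hcut
  have hne : a ≠ b := by
    rintro rfl
    exact hab .rfl
  have hvanish : ∀ k ≠ v, A k a * D k b = 0 := by
    intro k hk
    by_contra h
    obtain ⟨hAk, hDk⟩ := mul_ne_zero_iff.mp h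
    exact hab ((hdig.reachable_induce_of_ne_zero hk _ (hA.ne_zero_iff.mp hAk)).symm.trans
      (hdig.reachable_induce_of_ne_zero hk _ (hD.ne_zero_iff.mp hDk)))
  have hentry := congr_fun₂ hAD a b
  rw [transpose_mul_apply_eq_of_forall_ne hvanish, one_apply_ne hne] at hentry
  exact mul_ne_zero (hA.ne_zero_iff.mpr ((hdig v a hva.ne).mpr hva))
    (hD.ne_zero_iff.mpr ((hdig v b hvb.ne).mpr hvb)) hentry

/-- a connected graph with ≥ 3 vertices having a cut vertex gives a
symmetric digraph G* for which no negative-diagonal pattern allows symplectic pairs. -/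
theorem stmt3 {n : ℕ} (hn : 3 ≤ n) (G : SimpleGraph (Fin n)) (hconn : G.Connected)
    (v : Fin n) (hcut : ¬ (G.induce {u | u ≠ v}).Connected)
    (H : Matrix (Fin n) (Fin n) ℝ) (hp : IsSignPattern H) (hd : NegativeDiagonal H)
    (hdig : PatternDigraph H (fun a b => G.Adj a b)) :
    ¬ AllowsSymplecticPairs H :=
  stmt3_general hn G hconn v hcut H hdig
end

section
/- Every extended caterpillar digraph is noneven: there exists an assignment of weights 0,1 to its arcs so that every directed cycle has odd total weight. -/
open Matrix

/-!
Weight an arc `u → v` by `[u is a backbone vertex] + [pos u < pos v]`. The only arcs going up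
in the blossom order join consecutive backbone vertices, so on a directed cycle spanning the
levels `q, …, p` there is exactly one ascending arc leaving each level below `p`, and the backbone
vertices visited are precisely the tails of these arcs together with `bb p`. Hence a cycle visits
one more backbone vertex than it has ascending arcs, and its weight is odd.
-/

open Finset

open Fin.CommRing in
theorem Fin.exists_le_and_lt_map_add_one {α : Type*} [LinearOrder α] {m : ℕ}
    (P : Fin (m + 1) → α) {x : α} {a b : Fin (m + 1)} (ha : P a ≤ x) (hb : x < P b) :
    ∃ i, P i ≤ x ∧ x < P (i + 1) := by
  by_contra! hclosed
  have hstep : ∀ t : ℕ, P (a + t) ≤ x := by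
    intro t
    induction t with
    | zero => simpa using ha
    | succ t ih => simpa [add_assoc] using hclosed _ ih
  have := hstep (b - a).val
  rw [Fin.cast_val_eq_self, add_sub_cancel] at this
  exact this.not_gt hb

section Caterpillar

variable {n : ℕ} {pos : Fin n → ℕ} {bb : ℕ → Fin n}

def CaterpillarArc (pos : Fin n → ℕ) (bb : ℕ → Fin n) (u v : Fin n) : Prop :=
  v < u ∨ (u < v ∧ CaterpillarTreeEdge pos bb u v)

theorem CaterpillarArc.irrefl (u : Fin n) : ¬ CaterpillarArc pos bb u u := by
  rintro (h | ⟨h, -⟩) <;> exact lt_irrefl u h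

theorem CaterpillarArc.ascending (hmono : Monotone pos) {u v : Fin n}
    (h : CaterpillarArc pos bb u v) (hlt : pos u < pos v) :
    u = bb (pos u) ∧ v = bb (pos v) ∧ pos v = pos u + 1 := by
  rcases h with hvu | ⟨-, -, ⟨hu, hv, hpos | hpos⟩ | ⟨hpos, -⟩⟩
  · exact absurd (hmono hvu.le) hlt.not_ge
  · exact ⟨hu, hv, hpos⟩
  all_goals omega

theorem CaterpillarArc.backbone_of_lt_of_pos_eq {u v : Fin n}
    (h : CaterpillarArc pos bb u v) (huv : u < v) (hpos : pos u = pos v) :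
    u = bb (pos u) ∨ v = bb (pos v) := by
  rcases h with hvu | ⟨-, -, ⟨-, -, h | h⟩ | ⟨-, hbb⟩⟩
  · exact absurd huv hvu.not_gt
  · omega
  · omega
  · exact hbb

def caterpillarWeight (pos : Fin n → ℕ) (bb : ℕ → Fin n) (u v : Fin n) : ZMod 2 :=
  (if u = bb (pos u) then 1 else 0) + (if pos u < pos v then 1 else 0)

variable {m : ℕ} {c : Fin (m + 1) → Fin n}

def backboneIndices (pos : Fin n → ℕ) (bb : ℕ → Fin n) (c : Fin (m + 1) → Fin n) :
    Finset (Fin (m + 1)) :=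
  univ.filter fun i => c i = bb (pos (c i))

def ascentIndices (pos : Fin n → ℕ) (c : Fin (m + 1) → Fin n) : Finset (Fin (m + 1)) :=
  univ.filter fun i => pos (c i) < pos (c (i + 1))

theorem ascentIndices_subset_backboneIndices (hmono : Monotone pos)
    (hc : DicycleOn (CaterpillarArc pos bb) c) :
    ascentIndices pos c ⊆ backboneIndices pos bb c := by
  intro i hi
  simp only [ascentIndices, backboneIndices, mem_filter, mem_univ, true_and] at hi ⊢
  exact ((hc.2 i).ascending hmono hi).1

theorem eq_of_mem_backboneIndices (hc : DicycleOn (CaterpillarArc pos bb) c)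
    {i i' : Fin (m + 1)} (hi : i ∈ backboneIndices pos bb c) (hi' : i' ∈ backboneIndices pos bb c)
    (hpos : pos (c i) = pos (c i')) : i = i' := by
  simp only [backboneIndices, mem_filter, mem_univ, true_and] at hi hi'
  exact hc.1 (by rw [hi, hi', hpos])

theorem mem_ascentIndices_of_lt_top (hmono : Monotone pos)
    (hc : DicycleOn (CaterpillarArc pos bb) c) {top i : Fin (m + 1)}
    (hi : i ∈ backboneIndices pos bb c) (hlt : pos (c i) < pos (c top)) :
    i ∈ ascentIndices pos c := by
  obtain ⟨i', hle, hgt⟩ :=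
    Fin.exists_le_and_lt_map_add_one (fun i => pos (c i)) le_rfl hlt
  obtain ⟨hbb, -, hsucc⟩ := (hc.2 i').ascending hmono (hle.trans_lt hgt)
  have hi' : i' ∈ backboneIndices pos bb c := by
    simpa [backboneIndices] using hbb
  have : i' = i := eq_of_mem_backboneIndices hc hi' hi (by omega)
  subst this
  simpa [ascentIndices] using hle.trans_lt hgt

theorem exists_backbone_at_top (hmono : Monotone pos)
    (hc : DicycleOn (CaterpillarArc pos bb) c) {top : Fin (m + 1)}
    (htop : ∀ i, pos (c i) ≤ pos (c top)) :
    ∃ i ∈ backboneIndices pos bb c, pos (c i) = pos (c top) := by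
  simp only [backboneIndices, mem_filter, mem_univ, true_and]
  by_cases hflat : ∀ i, pos (c i) = pos (c top)
  · -- the cycle stays in one blossom, so its smallest vertex is left along a tree edge
    obtain ⟨i, -, hmin⟩ := exists_min_image univ c univ_nonempty
    have hne : c i ≠ c (i + 1) := by
      intro h
      have hloop := hc.2 i
      rw [← h] at hloop
      exact CaterpillarArc.irrefl _ hloop
    have hlt : c i < c (i + 1) := (hmin _ (mem_univ _)).lt_of_ne hne
    rcases (hc.2 i).backbone_of_lt_of_pos_eq hlt ((hflat i).trans (hflat _).symm) with h | h
    · exact ⟨i, h, hflat i⟩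
    · exact ⟨i + 1, h, hflat _⟩
  · push Not at hflat
    obtain ⟨a, ha⟩ := hflat
    have := htop a
    obtain ⟨i, hle, hgt⟩ := Fin.exists_le_and_lt_map_add_one (fun i => pos (c i))
      (x := pos (c top) - 1) (a := a) (b := top) (by omega) (by omega)
    obtain ⟨-, hbb, hsucc⟩ := (hc.2 i).ascending hmono (hle.trans_lt hgt)
    exact ⟨i + 1, hbb, by have := htop (i + 1); omega⟩

theorem card_backboneIndices_eq_card_ascentIndices_add_one (hmono : Monotone pos)
    (hc : DicycleOn (CaterpillarArc pos bb) c) :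
    #(backboneIndices pos bb c) = #(ascentIndices pos c) + 1 := by
  obtain ⟨top, -, htop⟩ := exists_max_image univ (fun i => pos (c i)) univ_nonempty
  replace htop : ∀ i, pos (c i) ≤ pos (c top) := fun i => htop i (mem_univ i)
  obtain ⟨t, ht, htpos⟩ := exists_backbone_at_top hmono hc htop
  have hsdiff : backboneIndices pos bb c \ ascentIndices pos c = {t} := by
    ext i
    simp only [mem_sdiff, mem_singleton]
    constructor
    · rintro ⟨hi, hiU⟩
      refine eq_of_mem_backboneIndices hc hi ht (le_antisymm ((htop i).trans htpos.ge) ?_)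
      by_contra! hlt
      exact hiU (mem_ascentIndices_of_lt_top hmono hc hi (htpos ▸ hlt))
    · intro hit
      rw [hit]
      refine ⟨ht, ?_⟩
      simpa [ascentIndices, htpos] using htop (t + 1)
  rw [← card_sdiff_add_card_eq_card (ascentIndices_subset_backboneIndices hmono hc), hsdiff,
    card_singleton, add_comm]

theorem isNoneven_caterpillarArc (hmono : Monotone pos) :
    IsNoneven (CaterpillarArc pos bb) := by
  refine ⟨caterpillarWeight pos bb, fun m c hc => ?_⟩
  have hsum : ∑ i, caterpillarWeight pos bb (c i) (c (i + 1)) =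
      #(backboneIndices pos bb c) + #(ascentIndices pos c) := by
    simp only [caterpillarWeight, sum_add_distrib, sum_boole, backboneIndices, ascentIndices]
  rw [hsum, card_backboneIndices_eq_card_ascentIndices_add_one hmono hc, Nat.cast_add,
    Nat.cast_one, add_right_comm, CharTwo.add_self_eq_zero, zero_add]

end Caterpillar

/-- every extended caterpillar is noneven. -/
theorem stmt5 {n : ℕ} (R : Fin n → Fin n → Prop) (h : IsExtendedCaterpillar R) :
    IsNoneven R := by
  obtain ⟨-, pos, bb, -, hmono, -, -, -, -, hR⟩ := h
  obtain rfl : R = CaterpillarArc pos bb := funext₂ fun u v => propext (hR u v)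
  exact isNoneven_caterpillarArc hmono
end

section
/- If D is a weighted digraph containing a weak k-double-cycle for some odd k ≥ 3 (as a subdigraph obtainable by vertex splittings and arc subdivisions of the symmetric double cycle C_k*), then for every 0,1-weighting of the arcs of D there is a directed cycle of even total weight; i.e., D is even. -/
open Matrix

/-!
Evenness passes to every digraph containing an even one, and it survives subdividing an arc
and splitting a vertex: given a weighting of the new digraph, give each arc of the old one the
total weight of the path that replaces it, so that every cycle of the old digraph lifts to a
cycle of the new one with the same weight. It remains to check `C_k*` for odd `k`: either some
digon `i ⇄ i + 1` has even weight, or all `k` digons are odd, and then the two directed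
`k`-cycles have odd total weight, so one of them is even.
-/

section Cycles

variable {V : Type*} {m : ℕ}

theorem forall_arc_cyclic_iff {R : V → V → Prop} {c : Fin (m + 1) → V} :
    (∀ i, R (c i) (c (i + 1))) ↔
      (∀ j : Fin m, R (c j.castSucc) (c j.succ)) ∧ R (c (Fin.last m)) (c 0) := by
  simp [Fin.forall_fin_succ', Fin.coeSucc_eq_succ]

theorem sum_arc_cyclic {M : Type*} [AddCommMonoid M] (w : V → V → M) (c : Fin (m + 1) → V) :
    ∑ i, w (c i) (c (i + 1)) =
      ∑ j : Fin m, w (c j.castSucc) (c j.succ) + w (c (Fin.last m)) (c 0) := by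
  simp [Fin.sum_univ_castSucc, Fin.coeSucc_eq_succ]

theorem DicycleOn.rotate {R : V → V → Prop} {c : Fin (m + 1) → V} (hc : DicycleOn R c)
    (t : Fin (m + 1)) : DicycleOn R (fun i => c (i + t)) :=
  ⟨hc.1.comp (add_left_injective t), fun i => by simpa [add_right_comm] using hc.2 (i + t)⟩

theorem sum_arc_rotate {M : Type*} [AddCommMonoid M] (w : V → V → M) (c : Fin (m + 1) → V)
    (t : Fin (m + 1)) : ∑ i, w (c (i + t)) (c (i + 1 + t)) = ∑ i, w (c i) (c (i + 1)) := by
  simpa [add_right_comm] using Equiv.sum_comp (Equiv.addRight t) (fun i => w (c i) (c (i + 1)))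

theorem dicycleOn_snoc_none {R : Option V → Option V → Prop} {d : Fin (m + 1) → V}
    (hd : Function.Injective d) (hpath : ∀ j : Fin m, R (some (d j.castSucc)) (some (d j.succ)))
    (hin : R (some (d (Fin.last m))) none) (hout : R none (some (d 0))) :
    DicycleOn R (Fin.snoc (some ∘ d) none : Fin (m + 2) → Option V) := by
  refine ⟨Fin.snoc_injective_of_injective ((Option.some_injective V).comp hd) (by simp), ?_⟩
  refine forall_arc_cyclic_iff.2 ⟨Fin.forall_fin_succ'.2 ⟨fun j => ?_, ?_⟩, ?_⟩
  · simpa [Fin.succ_castSucc, -Fin.castSucc_succ] using hpath j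
  · simpa using hin
  · simpa using hout

theorem sum_arc_snoc_none {M : Type*} [AddCommMonoid M] (w : Option V → Option V → M)
    (d : Fin (m + 1) → V) :
    ∑ i, w ((Fin.snoc (some ∘ d) none : Fin (m + 2) → Option V) i)
        ((Fin.snoc (some ∘ d) none : Fin (m + 2) → Option V) (i + 1)) =
      ∑ j : Fin m, w (some (d j.castSucc)) (some (d j.succ)) + w (some (d (Fin.last m))) none +
        w none (some (d 0)) := by
  rw [sum_arc_cyclic, Fin.sum_univ_castSucc]
  simp [Fin.succ_castSucc, -Fin.castSucc_succ]

end Cycles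

theorem IsEvenDigraph.map_of_injective {V W : Type*} {S : W → W → Prop} {R : V → V → Prop}
    (hS : IsEvenDigraph S) {f : W → V} (hf : Function.Injective f)
    (hSR : ∀ u v, S u v → R (f u) (f v)) : IsEvenDigraph R := by
  intro w
  obtain ⟨m, c, ⟨hc, harc⟩, hsum⟩ := hS (fun u v => w (f u) (f v))
  exact ⟨m, f ∘ c, ⟨hf.comp hc, fun i => hSR _ _ (harc i)⟩, hsum⟩

/-- The new vertex `none` is entered only from `a` and takes over the arcs from `a` to the
vertices in `P`: subdividing `a → b` is the case `P = {b}`, splitting `a` the case `P = univ`. -/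
theorem IsEvenDigraph.detour {V : Type*} {R : V → V → Prop}
    {R' : Option V → Option V → Prop} (hR : IsEvenDigraph R) (a : V) (P : V → Prop)
    (hkeep : ∀ u v, R u v → ¬(u = a ∧ P v) → R' (some u) (some v))
    (hin : R' (some a) none) (hout : ∀ v, R a v → P v → R' none (some v)) :
    IsEvenDigraph R' := by
  classical
  intro w
  set w₀ : V → V → ZMod 2 := fun u v =>
    if u = a ∧ P v then w (some a) none + w none (some v) else w (some u) (some v) with hw₀
  obtain ⟨m, c, hc, hsum⟩ := hR w₀
  by_cases hdetoured : ∃ i, c i = a ∧ P (c (i + 1))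
  · obtain ⟨i, hi, hPi⟩ := hdetoured
    set d := fun j => c (j + (i + 1)) with hd_def
    have hd : DicycleOn R d := hc.rotate (i + 1)
    have hd_last : d (Fin.last m) = a := by
      change c (Fin.last m + (i + 1)) = a
      rw [add_comm i, ← add_assoc, Fin.last_add_one, zero_add, hi]
    have hd_zero : d 0 = c (i + 1) := congrArg c (zero_add _)
    have hd_ne : ∀ j : Fin m, d j.castSucc ≠ a := fun j hj =>
      (Fin.castSucc_lt_last j).ne (hd.1 (hj.trans hd_last.symm))
    have hd_arc := forall_arc_cyclic_iff.1 hd.2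
    have hd_sum : ∑ j, w₀ (d j) (d (j + 1)) = 0 := (sum_arc_rotate w₀ c _).trans hsum
    refine ⟨m + 1, _, dicycleOn_snoc_none hd.1
      (fun j => hkeep _ _ (hd_arc.1 j) fun h => hd_ne j h.1) (hd_last ▸ hin)
      (hout _ (hd_last ▸ hd_arc.2) (hd_zero ▸ hPi)), ?_⟩
    rw [sum_arc_snoc_none, ← hd_sum, sum_arc_cyclic]
    simp [hw₀, hd_last, hd_zero, hd_ne, hPi, add_assoc]
  · push Not at hdetoured
    refine ⟨m, some ∘ c, ⟨(Option.some_injective V).comp hc.1, fun i =>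
      hkeep _ _ (hc.2 i) fun h => hdetoured i h.1 h.2⟩, ?_⟩
    rw [← hsum]
    exact Finset.sum_congr rfl fun i _ => (if_neg fun h => hdetoured i h.1 h.2).symm

theorem dicycleOn_pair {V : Type*} {R : V → V → Prop} {u v : V} (huv : u ≠ v) (h₁ : R u v)
    (h₂ : R v u) : DicycleOn R ![u, v] :=
  ⟨fun i j => by fin_cases i <;> fin_cases j <;> simp [huv, huv.symm],
    fun i => by fin_cases i <;> simpa⟩

theorem sum_arc_pair {V M : Type*} [AddCommMonoid M] (w : V → V → M) (u v : V) :
    ∑ i : Fin 2, w (![u, v] i) (![u, v] (i + 1)) = w u v + w v u := by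
  simp [Fin.sum_univ_two]

theorem isEvenDigraph_doubleCycle {m : ℕ} (hodd : Odd (m + 1)) (hm : m ≠ 0) :
    IsEvenDigraph (fun u v : Fin (m + 1) => v = u + 1 ∨ u = v + 1) := by
  intro w
  by_cases hdigon : ∃ i : Fin (m + 1), w i (i + 1) + w (i + 1) i = 0
  · obtain ⟨i, hi⟩ := hdigon
    have hne : i ≠ i + 1 := by
      simpa [eq_comm, Fin.one_eq_zero_iff] using hm
    exact ⟨1, ![i, i + 1], dicycleOn_pair hne (.inl rfl) (.inr rfl),
      (sum_arc_pair w _ _).trans hi⟩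
  · push Not at hdigon
    have hodd_sum : ∑ i : Fin (m + 1), w i (i + 1) + ∑ i : Fin (m + 1), w (i + 1) i = 1 := by
      rw [← Finset.sum_add_distrib, Fintype.sum_congr _ (fun _ => (1 : ZMod 2)) fun i =>
        Fin.eq_one_of_ne_zero _ (hdigon i)]
      simpa using hodd.natCast_zmod_two
    have hback : ∑ i : Fin (m + 1), w (-i) (-(i + 1)) = ∑ i : Fin (m + 1), w (i + 1) i :=
      Fintype.sum_equiv (Equiv.subLeft (-1)) _ _ fun i => by
        simp only [Equiv.subLeft_apply]
        congr 1 <;> abel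
    rcases (by decide : ∀ x y : ZMod 2, x + y = 1 → x = 0 ∨ y = 0) _ _ hodd_sum with h | h
    · exact ⟨m, id, ⟨Function.injective_id, fun _ => .inl rfl⟩, h⟩
    · exact ⟨m, Neg.neg, ⟨neg_injective, fun _ => .inr (by abel)⟩, hback.trans h⟩

theorem WeakDoubleCycle.isEvenDigraph {k : ℕ} {V : Type} {S : V → V → Prop}
    (h : WeakDoubleCycle k V S) (hodd : Odd k) (hk : 3 ≤ k) : IsEvenDigraph S := by
  induction h with
  | base m => exact isEvenDigraph_doubleCycle hodd (by omega)
  | subdivide a b _ _ ih =>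
    exact (ih hodd hk).detour a (· = b)
      (fun u v huv hab => .inr (.inr ⟨u, v, rfl, rfl, huv, hab⟩))
      (.inl ⟨rfl, rfl⟩) (fun v _ hv => .inr (.inl ⟨rfl, congrArg some hv⟩))
  | split a _ ih =>
    exact (ih hodd hk).detour a (fun _ => True)
      (fun u v huv hu => .inr (.inr ⟨u, v, rfl, rfl, huv, fun hua => hu ⟨hua, trivial⟩⟩))
      (.inl ⟨rfl, rfl⟩) (fun v hav _ => .inr (.inl ⟨v, rfl, rfl, hav⟩))

/-- a digraph containing a weak k-double-cycle (k odd, k ≥ 3) as a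
subdigraph is even. -/
theorem stmt7 {V : Type} (R : V → V → Prop)
    (h : ∃ (k : ℕ), Odd k ∧ 3 ≤ k ∧ ∃ (W : Type) (S : W → W → Prop) (f : W → V),
      Function.Injective f ∧ WeakDoubleCycle k W S ∧ ∀ u v, S u v → R (f u) (f v)) :
    IsEvenDigraph R := by
  obtain ⟨k, hodd, hk, W, S, f, hf, hS, hSR⟩ := h
  exact (hS.isEvenDigraph hodd hk).map_of_injective hf hSR
end

section
/- Let D be a subdigraph of an extended caterpillar with at least 2 vertices that is strongly connected. Then D has connectivity one, i.e., D is not strongly 2-connected (unless D has at most 2 vertices). -/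
open Matrix

/-- Crossing lemma: in a digraph mapping into an extended caterpillar, a walk from a
vertex at minimal blossom index `j0` to one at a higher index must pass through
vertices mapping to `bb j0` and `bb (j0+1)`. -/
lemma cross_lemma {n : ℕ} {pos : Fin n → ℕ} {bb : ℕ → Fin n}
    (hmono : Monotone pos)
    {α : Type*} {T : α → α → Prop} {h : α → Fin n}
    (hT : ∀ a b, T a b → (h b < h a ∨ (h a < h b ∧ CaterpillarTreeEdge pos bb (h a) (h b))))
    (j0 : ℕ) (hmin : ∀ a : α, j0 ≤ pos (h a)) :
    ∀ u v : α, Relation.ReflTransGen T u v → pos (h u) ≤ j0 → j0 < pos (h v) →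
      ∃ c c' : α, h c' = bb j0 ∧ h c = bb (j0 + 1) := by
  intro u v hpath hu
  induction hpath with
  | refl => intro hv; omega
  | @tail b v' hub harc ih =>
    intro hv
    by_cases hb : j0 < pos (h b)
    · exact ih hb
    · have hbj : pos (h b) = j0 := le_antisymm (not_lt.mp hb) (hmin b)
      rcases hT b v' harc with hlt | ⟨hlt, _, hcase⟩
      · have := hmono hlt.le
        omega
      · rcases hcase with ⟨hb1, hv1, hpp⟩ | ⟨hpp, _⟩
        · rcases hpp with h1 | h1
          · exact ⟨v', b, by rw [hb1, hbj], by rw [hv1, h1, hbj]⟩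
          · have := hmono hlt.le
            omega
        · omega

/-- a strongly connected subdigraph of an extended caterpillar with at
least 3 vertices is not strongly 2-connected. -/
theorem stmt8 {m : ℕ} (hm : 3 ≤ m) (R : Fin m → Fin m → Prop)
    (hsub : ∃ (n : ℕ) (E : Fin n → Fin n → Prop) (f : Fin m → Fin n),
      Function.Injective f ∧ IsExtendedCaterpillar E ∧ ∀ u v, R u v → E (f u) (f v))
    (hstrong : StronglyConnected R) :
    ¬ StronglyTwoConnected R := by
  obtain ⟨n, E, f, hinj, ⟨k, pos, bb, hk, hmono, hlt, hbb, hfirst, hlast, hE⟩, hmap⟩ := hsub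
  have hRE : ∀ a b : Fin m, R a b →
      (f b < f a ∨ (f a < f b ∧ CaterpillarTreeEdge pos bb (f a) (f b))) :=
    fun a b hab => (hE _ _).mp (hmap a b hab)
  intro h2
  have hne : (Finset.univ : Finset (Fin m)).Nonempty := ⟨⟨0, by omega⟩, Finset.mem_univ _⟩
  obtain ⟨s, -, hs⟩ := Finset.exists_min_image Finset.univ (fun a => pos (f a)) hne
  set j0 := pos (f s) with hj0
  have hmin : ∀ a : Fin m, j0 ≤ pos (f a) := fun a => hs a (Finset.mem_univ a)
  by_cases hall : ∀ b : Fin m, pos (f b) = j0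
  · -- single blossom case
    obtain ⟨a, -, hamin⟩ := Finset.exists_min_image Finset.univ (fun z => f z) hne
    obtain ⟨b, -, hbmax⟩ := Finset.exists_max_image Finset.univ (fun z => f z) hne
    have hab : a ≠ b := by
      rintro rfl
      have h01 : f ⟨0, by omega⟩ = f ⟨1, by omega⟩ := by
        have e0 := le_antisymm (hbmax ⟨0, by omega⟩ (Finset.mem_univ _))
          (hamin ⟨0, by omega⟩ (Finset.mem_univ _))
        have e1 := le_antisymm (hbmax ⟨1, by omega⟩ (Finset.mem_univ _))
          (hamin ⟨1, by omega⟩ (Finset.mem_univ _))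
        rw [e0, e1]
      have := hinj h01
      simp [Fin.ext_iff] at this
    -- find a vertex mapping to bb j0
    have hbbex : ∃ c' : Fin m, f c' = bb j0 := by
      rcases (hstrong a b).cases_head with heq | ⟨d, had, -⟩
      · exact absurd heq hab
      · rcases hRE a d had with hlt' | ⟨hlt', _, hcase⟩
        · exact absurd (hamin d (Finset.mem_univ d)) (not_le.mpr hlt')
        · rcases hcase with ⟨_, _, hpp⟩ | ⟨_, hor⟩
          · have := hall a; have := hall d; omega
          · rcases hor with h1 | h1
            · exact ⟨a, by rw [h1, hall a]⟩
            · exact ⟨d, by rw [h1, hall d]⟩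
    obtain ⟨c', hc'⟩ := hbbex
    -- two distinct vertices other than c'
    have h2card : 1 < (Finset.univ.erase c').card := by
      rw [Finset.card_erase_of_mem (Finset.mem_univ _), Finset.card_univ, Fintype.card_fin]
      omega
    obtain ⟨w1, hw1m, w2, hw2m, hww⟩ := Finset.one_lt_card.mp h2card
    have hw1 : w1 ≠ c' := (Finset.mem_erase.mp hw1m).1
    have hw2 : w2 ≠ c' := (Finset.mem_erase.mp hw2m).1
    have hnes : Nonempty {y : Fin m // y ≠ c'} := ⟨⟨w1, hw1⟩⟩
    obtain ⟨a', -, ha'⟩ := Finset.exists_min_image (Finset.univ : Finset {y : Fin m // y ≠ c'})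
      (fun z => f z.val) Finset.univ_nonempty
    have hb' : ∃ b' : {y : Fin m // y ≠ c'}, b' ≠ a' := by
      by_cases hh : (⟨w1, hw1⟩ : {y : Fin m // y ≠ c'}) = a'
      · refine ⟨⟨w2, hw2⟩, fun hcon => ?_⟩
        rw [← hh] at hcon
        exact hww (congrArg Subtype.val hcon).symm
      · exact ⟨⟨w1, hw1⟩, hh⟩
    obtain ⟨b', hb'ne⟩ := hb'
    rcases (h2 c' a' b').cases_head with heq | ⟨d, had, -⟩
    · exact hb'ne heq.symm
    · rcases hRE a'.val d.val had with hlt' | ⟨hlt', _, hcase⟩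
      · exact absurd (ha' d (Finset.mem_univ d)) (not_le.mpr hlt')
      · rcases hcase with ⟨_, _, hpp⟩ | ⟨_, hor⟩
        · have := hall a'.val; have := hall d.val; omega
        · rcases hor with h1 | h1
          · rw [hall a'.val, ← hc'] at h1
            exact a'.property (hinj h1)
          · rw [hall d.val, ← hc'] at h1
            exact d.property (hinj h1)
  · -- multi blossom case
    push_neg at hall
    obtain ⟨t, ht⟩ := hall
    have htgt : j0 < pos (f t) := lt_of_le_of_ne (hmin t) (Ne.symm ht)
    have hj0k : j0 < k := hlt (f s)
    have hj1k : j0 + 1 < k := lt_of_le_of_lt htgt (hlt (f t))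
    have hposbb0 : pos (bb j0) = j0 := hbb j0 hj0k
    have hposbb1 : pos (bb (j0 + 1)) = j0 + 1 := hbb (j0 + 1) hj1k
    obtain ⟨c, c', hc', hc⟩ := cross_lemma hmono hRE j0 hmin s t (hstrong s t) le_rfl htgt
    have hcc' : c ≠ c' := by
      intro hcon
      rw [hcon, hc'] at hc
      have : pos (bb j0) = pos (bb (j0 + 1)) := by rw [hc]
      omega
    -- a third vertex
    have h1card : 0 < ((Finset.univ.erase c).erase c').card := by
      rw [Finset.card_erase_of_mem (Finset.mem_erase.mpr ⟨Ne.symm hcc', Finset.mem_univ _⟩),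
        Finset.card_erase_of_mem (Finset.mem_univ _), Finset.card_univ, Fintype.card_fin]
      omega
    obtain ⟨w, hwm⟩ := Finset.card_pos.mp h1card
    have hwc' : w ≠ c' := (Finset.mem_erase.mp hwm).1
    have hwc : w ≠ c := (Finset.mem_erase.mp (Finset.mem_erase.mp hwm).2).1
    by_cases hw : pos (f w) = j0
    · -- delete c' (which maps to bb j0)
      have hpath := h2 c' ⟨w, hwc'⟩ ⟨c, hcc'⟩
      have hT : ∀ a b : {y : Fin m // y ≠ c'}, R a.val b.val →
          ((fun z : {y : Fin m // y ≠ c'} => f z.val) b < (fun z => f z.val) a ∨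
            ((fun z => f z.val) a < (fun z => f z.val) b ∧
              CaterpillarTreeEdge pos bb ((fun z => f z.val) a) ((fun z => f z.val) b))) :=
        fun a b hab => hRE a.val b.val hab
      obtain ⟨c2, c2', hc2', _⟩ := cross_lemma hmono hT j0 (fun z => hmin z.val)
        ⟨w, hwc'⟩ ⟨c, hcc'⟩ hpath (le_of_eq hw) (by simp only; rw [hc, hposbb1]; omega)
      rw [← hc'] at hc2'
      exact c2'.property (hinj hc2')
    · -- delete c (which maps to bb (j0+1))
      have hwgt : j0 < pos (f w) := lt_of_le_of_ne (hmin w) (Ne.symm hw)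
      have hpath := h2 c ⟨c', Ne.symm hcc'⟩ ⟨w, hwc⟩
      have hT : ∀ a b : {y : Fin m // y ≠ c}, R a.val b.val →
          ((fun z : {y : Fin m // y ≠ c} => f z.val) b < (fun z => f z.val) a ∨
            ((fun z => f z.val) a < (fun z => f z.val) b ∧
              CaterpillarTreeEdge pos bb ((fun z => f z.val) a) ((fun z => f z.val) b))) :=
        fun a b hab => hRE a.val b.val hab
      obtain ⟨c2, c2', _, hc2⟩ := cross_lemma hmono hT j0 (fun z => hmin z.val)
        ⟨c', Ne.symm hcc'⟩ ⟨w, hwc⟩ hpath (by simp only; rw [hc', hposbb0]) hwgt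
      rw [← hc] at hc2
      exact c2.property (hinj hc2)
end

section
/- Any strongly connected subdigraph D of an extended caterpillar with at least 2 vertices contains at least one vertex of outdegree one and at least one vertex of indegree one. -/
open Matrix

/-- Auxiliary: a predicate with a witness and at most one satisfying element has card one. -/
lemma stmt9_cardone {m : ℕ} (P : Fin m → Prop) (hex : ∃ u, P u)
    (huniq : ∀ x y, P x → P y → x = y) : Nat.card {u : Fin m // P u} = 1 := by
  rw [Nat.card_eq_one_iff_unique]
  obtain ⟨u, hu⟩ := hex
  exact ⟨⟨fun x y => Subtype.ext (huniq _ _ x.2 y.2)⟩, ⟨⟨u, hu⟩⟩⟩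

/-- a strongly connected subdigraph of an extended caterpillar with at
least 2 vertices has a vertex of outdegree one and a vertex of indegree one. -/
theorem stmt9 {m : ℕ} (hm : 2 ≤ m) (R : Fin m → Fin m → Prop)
    (hsub : ∃ (n : ℕ) (E : Fin n → Fin n → Prop) (f : Fin m → Fin n),
      Function.Injective f ∧ IsExtendedCaterpillar E ∧ ∀ u v, R u v → E (f u) (f v))
    (hstrong : StronglyConnected R) :
    (∃ v, Nat.card {u : Fin m // R v u} = 1) ∧ (∃ v, Nat.card {u : Fin m // R u v} = 1) := by
  obtain ⟨n, E, f, hf, ⟨k, pos, bb, hk, hmono, hlt, hposbb, h0, hk1, hE⟩, hRE⟩ := hsub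
  have hns : ∀ u v, R u v → f v < f u ∨ (f u < f v ∧ CaterpillarTreeEdge pos bb (f u) (f v)) :=
    fun u v h => (hE _ _).mp (hRE u v h)
  have hne2 : ∀ a : Fin m, ∃ v, v ≠ a := by
    intro a
    rcases eq_or_ne a ⟨0, by omega⟩ with h | h
    · exact ⟨⟨1, by omega⟩, by simp [h, Fin.ext_iff]⟩
    · exact ⟨⟨0, by omega⟩, h.symm⟩
  have hout : ∀ a, ∃ u, R a u := by
    intro a
    obtain ⟨v, hv⟩ := hne2 a
    rcases (hstrong a v).cases_head with h | ⟨c, hc, -⟩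
    · exact absurd h.symm hv
    · exact ⟨c, hc⟩
  have hin : ∀ a, ∃ u, R u a := by
    intro a
    obtain ⟨v, hv⟩ := hne2 a
    rcases (hstrong v a).cases_tail with h | ⟨c, -, hc⟩
    · exact absurd h.symm hv
    · exact ⟨c, hc⟩
  have hmne : (Finset.univ : Finset (Fin m)).Nonempty := ⟨⟨0, by omega⟩, Finset.mem_univ _⟩
  constructor
  · -- outdegree one
    obtain ⟨a, -, ha'⟩ := Finset.exists_min_image Finset.univ f hmne
    have ha : ∀ v, f a ≤ f v := fun v => ha' v (Finset.mem_univ v)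
    by_cases hu : ∀ u1 u2, R a u1 → R a u2 → u1 = u2
    · exact ⟨a, stmt9_cardone _ (hout a) hu⟩
    push_neg at hu
    obtain ⟨u1, u2, h1, h2, h12⟩ := hu
    have hup : ∀ u, R a u → f a < f u ∧ CaterpillarTreeEdge pos bb (f a) (f u) := by
      intro u h
      rcases hns a u h with h' | h'
      · exact absurd (ha u) (not_le.mpr h')
      · exact h'
    set j := pos (f a) with hj
    have habb : f a = bb j := by
      by_contra hc
      apply h12
      have key : ∀ u, R a u → f u = bb j := by
        intro u h
        rcases (hup u h).2.2 with ⟨h1', _⟩ | ⟨hpe, hor⟩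
        · exact absurd h1' hc
        · rcases hor with h' | h'
          · exact absurd h' hc
          · rw [h', ← hpe]
      exact hf ((key u1 h1).trans (key u2 h2).symm)
    have hQ : ∀ u, R a u → (pos (f u) = j ∧ f a < f u) ∨ f u = bb (j + 1) := by
      intro u h
      obtain ⟨hlt', tedge⟩ := hup u h
      rcases tedge.2 with ⟨_, hub, hpm⟩ | ⟨hpe, _⟩
      · right
        have hmo : j ≤ pos (f u) := hmono (le_of_lt hlt')
        have hj1 : pos (f u) = j + 1 := by
          rcases hpm with h' | h'
          · exact h'
          · omega
        rw [hub, hj1]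
      · left; exact ⟨hpe.symm, hlt'⟩
    have hb : ∃ b, R a b ∧ pos (f b) = j ∧ f a < f b := by
      rcases hQ u1 h1 with h' | hb1
      · exact ⟨u1, h1, h'⟩
      rcases hQ u2 h2 with h' | hb2
      · exact ⟨u2, h2, h'⟩
      exact absurd (hf (hb1.trans hb2.symm)) h12
    obtain ⟨b, hRb, hposb, hab⟩ := hb
    obtain ⟨c, hcmem, hcmin'⟩ := Finset.exists_min_image
      (Finset.univ.filter fun x => f a < f x) f ⟨b, by simp [hab]⟩
    have hac : f a < f c := by
      have := Finset.mem_filter.mp hcmem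
      exact this.2
    have hcmin : ∀ x, f a < f x → f c ≤ f x := fun x hx =>
      hcmin' x (Finset.mem_filter.mpr ⟨Finset.mem_univ x, hx⟩)
    have hcb : f c ≤ f b := hcmin b hab
    have hposc : pos (f c) = j := le_antisymm (hposb ▸ hmono hcb) (hmono (le_of_lt hac))
    have hcnb : f c ≠ f a := ne_of_gt hac
    have huniq : ∀ x, R c x → x = a := by
      intro x hx
      rcases hns c x hx with h' | ⟨hlt', tedge⟩
      · by_contra hxa
        have hax : f a < f x := lt_of_le_of_ne (ha x) fun h => hxa (hf h).symm
        exact absurd (hcmin x hax) (not_le.mpr h')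
      · exfalso
        rcases tedge.2 with ⟨hcb', _, _⟩ | ⟨hpe, hor⟩
        · exact hcnb (by rw [hcb', hposc, ← habb])
        · rcases hor with h' | h'
          · exact hcnb (by rw [h', hposc, ← habb])
          · have hxe : f x = f a := by rw [h', ← hpe, hposc, ← habb]
            exact lt_asymm hac (hxe ▸ hlt')
    exact ⟨c, stmt9_cardone _ (hout c)
      (fun x y hx hy => (huniq x hx).trans (huniq y hy).symm)⟩
  · -- indegree one
    obtain ⟨a, -, ha'⟩ := Finset.exists_max_image Finset.univ f hmne
    have ha : ∀ v, f v ≤ f a := fun v => ha' v (Finset.mem_univ v)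
    by_cases hu : ∀ u1 u2, R u1 a → R u2 a → u1 = u2
    · exact ⟨a, stmt9_cardone _ (hin a) hu⟩
    push_neg at hu
    obtain ⟨u1, u2, h1, h2, h12⟩ := hu
    have hup : ∀ u, R u a → f u < f a ∧ CaterpillarTreeEdge pos bb (f u) (f a) := by
      intro u h
      rcases hns u a h with h' | h'
      · exact absurd (ha u) (not_le.mpr h')
      · exact h'
    set j := pos (f a) with hj
    have habb : f a = bb j := by
      by_contra hc
      apply h12
      have key : ∀ u, R u a → f u = bb j := by
        intro u h
        obtain ⟨hlt', hcase⟩ := hup u h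
        rcases hcase.2 with ⟨_, h1', _⟩ | ⟨hpe, hor⟩
        · exact absurd h1' hc
        · rcases hor with h' | h'
          · rw [h', hpe]
          · exact absurd h' hc
      exact hf ((key u1 h1).trans (key u2 h2).symm)
    have hQ : ∀ u, R u a → (pos (f u) = j ∧ f u < f a) ∨
        (f u = bb (pos (f u)) ∧ pos (f u) + 1 = j) := by
      intro u h
      obtain ⟨hlt', tedge⟩ := hup u h
      rcases tedge.2 with ⟨hub, _, hpm⟩ | ⟨hpe, _⟩
      · right
        have hmo : pos (f u) ≤ j := hmono (le_of_lt hlt')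
        refine ⟨hub, ?_⟩
        rcases hpm with h' | h'
        · omega
        · omega
      · left; exact ⟨hpe, hlt'⟩
    have hb : ∃ b, R b a ∧ pos (f b) = j ∧ f b < f a := by
      rcases hQ u1 h1 with h' | hb1
      · exact ⟨u1, h1, h'⟩
      rcases hQ u2 h2 with h' | hb2
      · exact ⟨u2, h2, h'⟩
      refine absurd (hf ?_) h12
      rw [hb1.1, hb2.1]
      congr 1
      omega
    obtain ⟨b, hRb, hposb, hab⟩ := hb
    obtain ⟨c, hcmem, hcmax'⟩ := Finset.exists_max_image
      (Finset.univ.filter fun x => f x < f a) f ⟨b, by simp [hab]⟩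
    have hac : f c < f a := (Finset.mem_filter.mp hcmem).2
    have hcmax : ∀ x, f x < f a → f x ≤ f c := fun x hx =>
      hcmax' x (Finset.mem_filter.mpr ⟨Finset.mem_univ x, hx⟩)
    have hcb : f b ≤ f c := hcmax b hab
    have hposc : pos (f c) = j := le_antisymm (hmono (le_of_lt hac)) (hposb ▸ hmono hcb)
    have hcnb : f c ≠ f a := ne_of_lt hac
    have huniq : ∀ x, R x c → x = a := by
      intro x hx
      rcases hns x c hx with h' | ⟨hlt', tedge⟩
      · by_contra hxa
        have hax : f x < f a := lt_of_le_of_ne (ha x) fun h => hxa (hf h)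
        exact absurd (hcmax x hax) (not_le.mpr h')
      · exfalso
        rcases tedge.2 with ⟨_, hcb', _⟩ | ⟨hpe, hor⟩
        · exact hcnb (by rw [hcb', hposc, ← habb])
        · rcases hor with h' | h'
          · have hxe : f x = f a := by rw [h', hpe, hposc, ← habb]
            exact lt_asymm hac (hxe ▸ hlt')
          · exact hcnb (by rw [h', hposc, ← habb])
    exact ⟨c, stmt9_cardone _ (hin c)
      (fun x y hx hy => (huniq x hx).trans (huniq y hy).symm)⟩
end

section
/- The digraphs W_4 and C_4* correspond to sign-equivalent negative-diagonal sign patterns: there exist negative-diagonal sign-nonsingular 4×4 patterns H_1 with digraph W_4 and H_2 with digraph C_4* such that H_2 can be obtained from H_1 by negating some rows and columns and permuting rows and columns. -/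
open Matrix

/-! A real matrix `A` with sign pattern `H` factors entrywise as `A i j = |A i j| * H i j`, so each
term of the Leibniz expansion of `det A` is a nonnegative multiple of the corresponding term
for `H`. Hence if no term for `H` is negative and some term is positive, then `det A > 0` for
every such `A`. Both explicit patterns pass this test (the identity term is `(-1)^4 = 1`), and
they differ by negating one row and swapping two columns. -/

open Equiv

theorem Real.abs_mul_sign (r : ℝ) : |r| * Real.sign r = r := by
  rcases lt_trichotomy r 0 with h | rfl | h
  · rw [abs_of_neg h, Real.sign_of_neg h]; ring
  · simp
  · rw [abs_of_pos h, Real.sign_of_pos h, mul_one]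

section SignPattern

variable {I : Type*}

theorem HasSignPattern.prod_eq [Fintype I] {A H : Matrix I I ℝ} (hA : HasSignPattern A H)
    (σ : Perm I) : ∏ i, A (σ i) i = (∏ i, |A (σ i) i|) * ∏ i, H (σ i) i := by
  rw [← Finset.prod_mul_distrib]
  exact Finset.prod_congr rfl fun i _ => by rw [← hA, Real.abs_mul_sign]

theorem isSignNonsingular_of_det_terms_nonneg [Fintype I] [DecidableEq I] (H : Matrix I I ℝ)
    (hnonneg : ∀ σ : Perm I, 0 ≤ (Perm.sign σ : ℝ) * ∏ i, H (σ i) i)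
    (hpos : ∃ σ : Perm I, 0 < (Perm.sign σ : ℝ) * ∏ i, H (σ i) i) :
    IsSignNonsingular H := by
  intro A hA
  have hterm : ∀ σ : Perm I, (Perm.sign σ : ℝ) * ∏ i, A (σ i) i =
      (∏ i, |A (σ i) i|) * ((Perm.sign σ : ℝ) * ∏ i, H (σ i) i) := fun σ => by
    rw [hA.prod_eq]; ring
  obtain ⟨σ₀, hσ₀⟩ := hpos
  have hσ₀A : ∀ i, A (σ₀ i) i ≠ 0 := fun i hi => by
    have hH : H (σ₀ i) i = 0 := by rw [← hA, hi, Real.sign_zero]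
    have := Finset.prod_eq_zero (f := fun i => H (σ₀ i) i) (Finset.mem_univ i) hH
    simp only [this, mul_zero, lt_self_iff_false] at hσ₀
  refine ne_of_gt ?_
  rw [det_apply']
  refine Finset.sum_pos' (fun σ _ => ?_) ⟨σ₀, Finset.mem_univ _, ?_⟩ <;> rw [hterm]
  · exact mul_nonneg (Finset.prod_nonneg fun i _ => abs_nonneg _) (hnonneg σ)
  · exact mul_pos (Finset.prod_pos fun i _ => abs_pos.2 (hσ₀A i)) hσ₀

/-! Patterns are written over `ℤ`, where their defining conditions are decidable, and cast
to `ℝ`. -/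

theorem isSignPattern_intCast {M : I → I → ℤ}
    (hM : ∀ i j, M i j = -1 ∨ M i j = 0 ∨ M i j = 1) :
    IsSignPattern (Matrix.of fun i j => (M i j : ℝ)) :=
  fun i j => by simp only [of_apply]; exact_mod_cast hM i j

theorem negativeDiagonal_intCast {M : I → I → ℤ} (hM : ∀ i, M i i = -1) :
    NegativeDiagonal (Matrix.of fun i j => (M i j : ℝ)) :=
  fun i => by simp only [of_apply]; exact_mod_cast hM i

theorem patternDigraph_intCast {M : I → I → ℤ} {R : I → I → Prop}
    (hM : ∀ i j, i ≠ j → (M i j ≠ 0 ↔ R i j)) :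
    PatternDigraph (Matrix.of fun i j => (M i j : ℝ)) R :=
  fun i j hij => by simpa only [of_apply, Int.cast_ne_zero] using hM i j hij

theorem isSignNonsingular_intCast [Fintype I] [DecidableEq I] {M : I → I → ℤ}
    (hnonneg : ∀ σ : Perm I, 0 ≤ (Perm.sign σ : ℤ) * ∏ i, M (σ i) i)
    (hpos : ∃ σ : Perm I, 0 < (Perm.sign σ : ℤ) * ∏ i, M (σ i) i) :
    IsSignNonsingular (Matrix.of fun i j => (M i j : ℝ)) := by
  refine isSignNonsingular_of_det_terms_nonneg _ (fun σ => ?_) ?_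
  · simp only [of_apply]; exact_mod_cast hnonneg σ
  · obtain ⟨σ, hσ⟩ := hpos
    exact ⟨σ, by simp only [of_apply]; exact_mod_cast hσ⟩

theorem exists_signEquiv_intCast {M N : I → I → ℤ} (r c : I → ℤ) (σ τ : Perm I)
    (hr : ∀ i, r i = 1 ∨ r i = -1) (hc : ∀ j, c j = 1 ∨ c j = -1)
    (hMN : ∀ i j, N i j = r i * c j * M (σ i) (τ j)) :
    ∃ (r c : I → ℝ) (σ τ : Perm I),
      (∀ i, r i = 1 ∨ r i = -1) ∧ (∀ i, c i = 1 ∨ c i = -1) ∧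
      ∀ i j, (Matrix.of fun i j => (N i j : ℝ)) i j =
        r i * c j * (Matrix.of fun i j => (M i j : ℝ)) (σ i) (τ j) :=
  ⟨fun i => r i, fun j => c j, σ, τ,
    fun i => show (r i : ℝ) = 1 ∨ (r i : ℝ) = -1 by exact_mod_cast hr i,
    fun j => show (c j : ℝ) = 1 ∨ (c j : ℝ) = -1 by exact_mod_cast hc j,
    fun i j => by simp only [of_apply]; exact_mod_cast hMN i j⟩

end SignPattern

def w4Pattern : Fin 4 → Fin 4 → ℤ :=
  ![![-1, 1, 1, 0], ![-1, -1, 0, 1], ![0, 1, -1, 1], ![-1, 0, -1, -1]]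

def c4StarPattern : Fin 4 → Fin 4 → ℤ :=
  ![![-1, 1, 0, 1], ![-1, -1, 1, 0], ![0, -1, -1, 1], ![-1, 0, -1, -1]]

/-- W₄ and C₄* correspond to sign-equivalent negative-diagonal
sign-nonsingular patterns. -/
theorem stmt12 : ∃ H₁ H₂ : Matrix (Fin 4) (Fin 4) ℝ,
    IsSignPattern H₁ ∧ IsSignPattern H₂ ∧ NegativeDiagonal H₁ ∧ NegativeDiagonal H₂ ∧
    IsSignNonsingular H₁ ∧ IsSignNonsingular H₂ ∧
    PatternDigraph H₁ W4 ∧ PatternDigraph H₂ C4star ∧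
    ∃ (r c : Fin 4 → ℝ) (σ τ : Equiv.Perm (Fin 4)),
      (∀ i, r i = 1 ∨ r i = -1) ∧ (∀ i, c i = 1 ∨ c i = -1) ∧
      ∀ i j, H₂ i j = r i * c j * H₁ (σ i) (τ j) := by
  refine ⟨Matrix.of fun i j => (w4Pattern i j : ℝ),
    Matrix.of fun i j => (c4StarPattern i j : ℝ),
    isSignPattern_intCast (by decide), isSignPattern_intCast (by decide),
    negativeDiagonal_intCast (by decide), negativeDiagonal_intCast (by decide),
    isSignNonsingular_intCast (by decide) ⟨1, by decide⟩,
    isSignNonsingular_intCast (by decide) ⟨1, by decide⟩,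
    patternDigraph_intCast (by unfold W4; decide),
    patternDigraph_intCast (by unfold C4star; decide),
    exists_signEquiv_intCast ![1, 1, -1, 1] 1 1 (swap 2 3) (by decide) (by decide) (by decide)⟩
end

section
/- Let H be a sign-nonsingular n×n sign pattern that allows symplectic pairs. Then for all indices i,j: if H_{ij} = 0 then the (i,j) minor pattern H[i,j] is not sign-nonsingular, and if H_{ij} ≠ 0 then H[i,j] is sign-nonsingular. -/
open Matrix

section Stmt13Aux
open Equiv

lemma sign_neg_one_iff {x : ℝ} : Real.sign x = -1 ↔ x < 0 := by
  constructor
  · intro h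
    rcases lt_trichotomy x 0 with h'|h'|h'
    · exact h'
    · simp [h', Real.sign_zero] at h
    · rw [Real.sign_of_pos h'] at h; norm_num at h
  · exact Real.sign_of_neg

lemma sign_one_iff {x : ℝ} : Real.sign x = 1 ↔ 0 < x := by
  constructor
  · intro h
    rcases lt_trichotomy x 0 with h'|h'|h'
    · rw [Real.sign_of_neg h'] at h; norm_num at h
    · simp [h', Real.sign_zero] at h
    · exact h'
  · exact Real.sign_of_pos

lemma sign_smul_pos {δ x : ℝ} (hδ : 0 < δ) : Real.sign (δ * x) = Real.sign x := by
  rcases lt_trichotomy x 0 with h|h|h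
  · rw [Real.sign_of_neg h, Real.sign_of_neg (mul_neg_of_pos_of_neg hδ h)]
  · simp [h]
  · rw [Real.sign_of_pos h, Real.sign_of_pos (mul_pos hδ h)]

/-- convex combinations preserve common sign -/
lemma sign_combo {a b u : ℝ} (h0 : 0 ≤ u) (h1 : u ≤ 1)
    (hab : Real.sign a = Real.sign b) : Real.sign ((1-u)*a + u*b) = Real.sign a := by
  rcases lt_trichotomy a 0 with h|h|h
  · have hb : b < 0 := sign_neg_one_iff.mp (hab ▸ Real.sign_of_neg h)
    rw [Real.sign_of_neg h, sign_neg_one_iff]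
    rcases eq_or_lt_of_le h1 with rfl|h1'
    · simpa using hb
    · have : (1-u)*a < 0 := mul_neg_of_pos_of_neg (by linarith) h
      nlinarith
  · have hb : b = 0 := by
      have := hab.symm; rw [h, Real.sign_zero] at this
      exact Real.sign_eq_zero_iff.mp this
    simp [h, hb]
  · have hb : 0 < b := sign_one_iff.mp (hab ▸ Real.sign_of_pos h)
    rw [Real.sign_of_pos h, sign_one_iff]
    rcases eq_or_lt_of_le h1 with rfl|h1'
    · simpa using hb
    · have : 0 < (1-u)*a := mul_pos (by linarith) h
      nlinarith

/-- determinants of two matrices with the same sign-nonsingular pattern have the same sign -/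
lemma det_mul_det_pos {I : Type*} [Fintype I] [DecidableEq I] {H : Matrix I I ℝ}
    (hsns : IsSignNonsingular H) {M P : Matrix I I ℝ}
    (hM : HasSignPattern M H) (hP : HasSignPattern P H) : 0 < M.det * P.det := by
  have key : ∀ M P : Matrix I I ℝ, HasSignPattern M H → HasSignPattern P H →
      M.det < 0 → 0 < P.det → False := by
    intro M P hM hP hMd hPd
    set f : ℝ → ℝ := fun u => ((1-u) • M + u • P).det with hf
    have hfc : Continuous f := by
      apply Continuous.matrix_det
      exact (((continuous_const.sub continuous_id).smul continuous_const).add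
        (continuous_id.smul continuous_const))
    have hmem : ∀ u : ℝ, 0 ≤ u → u ≤ 1 → HasSignPattern ((1-u) • M + u • P) H := by
      intro u h0 h1 l m
      have : ((1-u) • M + u • P) l m = (1-u) * M l m + u * P l m := by
        simp [Matrix.add_apply, Matrix.smul_apply, smul_eq_mul]
      rw [this, sign_combo h0 h1 ((hM l m).trans (hP l m).symm), hM l m]
    have h0 : f 0 = M.det := by simp [hf]
    have h1 : f 1 = P.det := by simp [hf]
    have : (0:ℝ) ∈ Set.Icc (f 0) (f 1) := by
      rw [h0, h1]; exact ⟨le_of_lt hMd, le_of_lt hPd⟩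
    obtain ⟨u, hu, hfu⟩ := intermediate_value_Icc zero_le_one hfc.continuousOn this
    exact hsns _ (hmem u hu.1 hu.2) hfu
  have hM' := hsns M hM
  have hP' := hsns P hP
  rcases (mul_ne_zero hM' hP').lt_or_gt with h|h
  · exfalso
    rcases mul_neg_iff.mp h with ⟨ha, hb⟩|⟨ha, hb⟩
    · exact key P M hP hM hb ha
    · exact key M P hM hP ha hb
  · exact h

/-- limit lemma: a family in Q(H) for δ > 0 has nonnegative det·det at δ = 0 -/
lemma det_limit_nonneg {I : Type*} [Fintype I] [DecidableEq I] {H : Matrix I I ℝ}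
    (hsns : IsSignNonsingular H) {A : Matrix I I ℝ} (hA : HasSignPattern A H)
    {F : ℝ → Matrix I I ℝ} (hF : Continuous F)
    (hmem : ∀ δ : ℝ, 0 < δ → HasSignPattern (F δ) H) :
    0 ≤ (F 0).det * A.det := by
  have hg : Continuous fun δ => (F δ).det * A.det := (hF.matrix_det).mul continuous_const
  refine ge_of_tendsto (hg.continuousAt.continuousWithinAt
    (s := Set.Ioi (0:ℝ))) ?_
  filter_upwards [self_mem_nhdsWithin] with δ (hδ : δ ∈ Set.Ioi 0)
  exact le_of_lt (det_mul_det_pos hsns (hmem δ hδ) hA)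

lemma sign_pattern_entry {x : ℝ} (h : x = -1 ∨ x = 0 ∨ x = 1) : Real.sign x = x := by
  rcases h with h|h|h <;> rw [h]
  · exact Real.sign_of_neg (by norm_num)
  · exact Real.sign_zero
  · exact Real.sign_one

lemma lemC {n : ℕ} {H : Matrix (Fin (n+1)) (Fin (n+1)) ℝ} (hp : IsSignPattern H)
    (hsns : IsSignNonsingular H) {A : Matrix (Fin (n+1)) (Fin (n+1)) ℝ}
    (hA : HasSignPattern A H) (i j : Fin (n+1)) {B : Matrix (Fin n) (Fin n) ℝ}
    (hB : HasSignPattern B (H.submatrix i.succAbove j.succAbove)) :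
    0 ≤ ((-1)^((i:ℕ)+(j:ℕ)) * H i j * B.det) * A.det := by
  set F : ℝ → Matrix (Fin (n+1)) (Fin (n+1)) ℝ := fun δ => Matrix.of fun l m =>
    (finSuccEquiv' i l).elim
      ((finSuccEquiv' j m).elim (H i j) (fun _ => δ * H l m))
      (fun k => (finSuccEquiv' j m).elim (δ * H l m) (fun r => B k r)) with hF
  have hFc : Continuous F := by
    apply continuous_matrix
    intro l m
    rcases h1 : finSuccEquiv' i l with _|k <;> rcases h2 : finSuccEquiv' j m with _|r <;>
      simp only [hF, Matrix.of_apply, h1, h2, Option.elim] <;> fun_prop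
  have hmem : ∀ δ : ℝ, 0 < δ → HasSignPattern (F δ) H := by
    intro δ hδ l m
    rcases eq_or_ne l i with rfl|hl
    · rcases eq_or_ne m j with rfl|hm
      · simp only [hF, Matrix.of_apply, finSuccEquiv'_at, Option.elim]
        exact sign_pattern_entry (hp l m)
      · obtain ⟨r, hr⟩ := Fin.exists_succAbove_eq hm
        have h2 : finSuccEquiv' j m = some r := by rw [← hr, finSuccEquiv'_succAbove]
        simp only [hF, Matrix.of_apply, finSuccEquiv'_at, h2, Option.elim]
        rw [sign_smul_pos hδ]
        exact sign_pattern_entry (hp l m)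
    · obtain ⟨k, hk⟩ := Fin.exists_succAbove_eq hl
      have h1 : finSuccEquiv' i l = some k := by rw [← hk, finSuccEquiv'_succAbove]
      rcases eq_or_ne m j with rfl|hm
      · simp only [hF, Matrix.of_apply, h1, finSuccEquiv'_at, Option.elim]
        rw [sign_smul_pos hδ]
        exact sign_pattern_entry (hp l m)
      · obtain ⟨r, hr⟩ := Fin.exists_succAbove_eq hm
        have h2 : finSuccEquiv' j m = some r := by rw [← hr, finSuccEquiv'_succAbove]
        simp only [hF, Matrix.of_apply, h1, h2, Option.elim]
        have := hB k r
        rw [Matrix.submatrix_apply, hk, hr] at this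
        exact this
  have hsub : (F 0).submatrix i.succAbove j.succAbove = B := by
    ext k r
    simp only [hF, Matrix.submatrix_apply, Matrix.of_apply, finSuccEquiv'_succAbove, Option.elim]
  have hdet0 : (F 0).det = (-1)^((i:ℕ)+(j:ℕ)) * H i j * B.det := by
    rw [Matrix.det_succ_row (F 0) i]
    rw [Finset.sum_eq_single_of_mem j (Finset.mem_univ j)]
    · have hij : (F 0) i j = H i j := by
        simp only [hF, Matrix.of_apply, finSuccEquiv'_at, Option.elim]
      rw [hij, hsub, mul_assoc]
    · intro m _ hm
      obtain ⟨r, hr⟩ := Fin.exists_succAbove_eq hm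
      have h2 : finSuccEquiv' j m = some r := by rw [← hr, finSuccEquiv'_succAbove]
      have : (F 0) i m = 0 := by
        simp only [hF, Matrix.of_apply, finSuccEquiv'_at, h2, Option.elim, zero_mul]
      rw [this, mul_zero, zero_mul]
  have := det_limit_nonneg hsns hA hFc hmem
  rwa [hdet0] at this

/-- determinant of a single-permutation-supported matrix -/
lemma det_perm_support {n : ℕ} (d : Matrix (Fin n) (Fin n) ℝ) (σ : Equiv.Perm (Fin n)) :
    (Matrix.of fun k r => if k = σ r then d k r else 0).det
      = ((Equiv.Perm.sign σ : ℤ) : ℝ) * ∏ r, d (σ r) r := by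
  rw [Matrix.det_apply']
  rw [Finset.sum_eq_single_of_mem σ (Finset.mem_univ σ)]
  · congr 1
    apply Finset.prod_congr rfl
    intro r _
    simp
  · intro τ _ hτ
    have : ∃ r, τ r ≠ σ r := by
      by_contra hc
      push_neg at hc
      exact hτ (Equiv.ext hc)
    obtain ⟨r, hr⟩ := this
    rw [Finset.prod_eq_zero (Finset.mem_univ r), mul_zero]
    simp [hr]

lemma term_pos {n : ℕ} {H : Matrix (Fin (n+1)) (Fin (n+1)) ℝ} (hp : IsSignPattern H)
    (hsns : IsSignNonsingular H) {A : Matrix (Fin (n+1)) (Fin (n+1)) ℝ}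
    (hA : HasSignPattern A H) (i j : Fin (n+1)) (hij : H i j ≠ 0)
    (σ : Equiv.Perm (Fin n))
    (hσ : ∀ r, H (i.succAbove (σ r)) (j.succAbove r) ≠ 0) :
    0 < ((-1)^((i:ℕ)+(j:ℕ)) * H i j *
      (((Equiv.Perm.sign σ : ℤ) : ℝ) * ∏ r, H (i.succAbove (σ r)) (j.succAbove r))) * A.det := by
  set H' := H.submatrix i.succAbove j.succAbove with hH'
  set G : ℝ → Matrix (Fin n) (Fin n) ℝ := fun δ =>
    Matrix.of fun k r => if k = σ r then H' k r else δ * H' k r with hG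
  have hGc : Continuous fun δ => ((-1:ℝ)^((i:ℕ)+(j:ℕ)) * H i j * (G δ).det) * A.det := by
    apply Continuous.mul _ continuous_const
    apply Continuous.mul continuous_const
    apply Continuous.matrix_det
    apply continuous_matrix
    intro k r
    by_cases h : k = σ r <;> simp only [hG, Matrix.of_apply, h, if_pos, if_neg, ite_true,
      ite_false] <;> fun_prop
  have hmem : ∀ δ : ℝ, 0 < δ → HasSignPattern (G δ) H' := by
    intro δ hδ k r
    have hpe : H' k r = -1 ∨ H' k r = 0 ∨ H' k r = 1 := hp _ _
    by_cases h : k = σ r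
    · subst h
      simp only [hG, Matrix.of_apply, if_pos rfl]
      exact sign_pattern_entry hpe
    · simp only [hG, Matrix.of_apply, if_neg h]
      rw [sign_smul_pos hδ]; exact sign_pattern_entry hpe
  have key : ∀ δ : ℝ, 0 < δ →
      0 ≤ ((-1:ℝ)^((i:ℕ)+(j:ℕ)) * H i j * (G δ).det) * A.det := by
    intro δ hδ
    exact lemC hp hsns hA i j (hmem δ hδ)
  have hlim : 0 ≤ ((-1:ℝ)^((i:ℕ)+(j:ℕ)) * H i j * (G 0).det) * A.det := by
    refine ge_of_tendsto (hGc.continuousAt.continuousWithinAt (s := Set.Ioi (0:ℝ))) ?_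
    filter_upwards [self_mem_nhdsWithin] with δ (hδ : δ ∈ Set.Ioi 0)
    exact key δ hδ
  have hdetG0 : (G 0).det = ((Equiv.Perm.sign σ : ℤ) : ℝ) * ∏ r, H' (σ r) r := by
    have : G 0 = Matrix.of fun k r => if k = σ r then H' k r else 0 := by
      ext k r
      simp only [hG, Matrix.of_apply]
      split <;> simp
    rw [this, det_perm_support]
  rw [hdetG0] at hlim
  have hne : (((-1:ℝ)^((i:ℕ)+(j:ℕ)) * H i j *
      (((Equiv.Perm.sign σ : ℤ) : ℝ) * ∏ r, H' (σ r) r)) * A.det) ≠ 0 := by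
    apply mul_ne_zero
    apply mul_ne_zero (mul_ne_zero (pow_ne_zero _ (by norm_num)) hij)
    apply mul_ne_zero
    · exact_mod_cast Units.ne_zero (Equiv.Perm.sign σ)
    · exact Finset.prod_ne_zero_iff.mpr fun r _ => hσ r
    · exact hsns A hA
  have goal_eq : ∀ r : Fin n, H' (σ r) r = H (i.succAbove (σ r)) (j.succAbove r) := fun r => rfl
  simp only [goal_eq] at hlim hne ⊢
  exact lt_of_le_of_ne hlim (Ne.symm hne)

lemma real_sign_mul_abs (x : ℝ) : Real.sign x * |x| = x := by
  rcases lt_trichotomy x 0 with h|h|h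
  · rw [Real.sign_of_neg h, abs_of_neg h]; ring
  · simp [h]
  · rw [Real.sign_of_pos h, abs_of_pos h]; ring

lemma minor_sns {n : ℕ} {H : Matrix (Fin (n+1)) (Fin (n+1)) ℝ} (hp : IsSignPattern H)
    (hsns : IsSignNonsingular H) {A : Matrix (Fin (n+1)) (Fin (n+1)) ℝ}
    (hA : HasSignPattern A H) (i j : Fin (n+1)) (hij : H i j ≠ 0)
    (hA'det : (A.submatrix i.succAbove j.succAbove).det ≠ 0) :
    IsSignNonsingular (H.submatrix i.succAbove j.succAbove) := by
  classical
  set H' := H.submatrix i.succAbove j.succAbove with hH'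
  intro B hB
  set c : ℝ := (-1)^((i:ℕ)+(j:ℕ)) * H i j with hc
  -- witness permutation
  have hA'' : (A.submatrix i.succAbove j.succAbove).det ≠ 0 := hA'det
  rw [Matrix.det_apply'] at hA''
  obtain ⟨σ₀, -, hσ₀t⟩ := Finset.exists_ne_zero_of_sum_ne_zero hA''
  have hσ₀ : ∀ r, H' (σ₀ r) r ≠ 0 := by
    intro r
    have hprod : (∏ r, (A.submatrix i.succAbove j.succAbove) (σ₀ r) r) ≠ 0 :=
      right_ne_zero_of_mul hσ₀t
    have hent : (A.submatrix i.succAbove j.succAbove) (σ₀ r) r ≠ 0 :=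
      Finset.prod_ne_zero_iff.mp hprod r (Finset.mem_univ r)
    intro h0
    exact hent (Real.sign_eq_zero_iff.mp ((hA (i.succAbove (σ₀ r)) (j.succAbove r)).trans h0))
  -- each permutation term is nonneg w.r.t. the global sign
  have hterm : ∀ σ : Equiv.Perm (Fin n), (∀ r, H' (σ r) r ≠ 0) →
      0 < (c * (((Equiv.Perm.sign σ : ℤ) : ℝ) * ∏ r, B (σ r) r)) * A.det := by
    intro σ hσ
    have h1 := term_pos hp hsns hA i j hij σ (fun r => hσ r)
    have hBne : ∀ r : Fin n, B (σ r) r ≠ 0 := by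
      intro r h0
      apply hσ r
      have := hB (σ r) r
      rw [h0, Real.sign_zero] at this
      exact this.symm
    have habs : (∏ r, B (σ r) r) = (∏ r, H' (σ r) r) * ∏ r, |B (σ r) r| := by
      rw [← Finset.prod_mul_distrib]
      refine Finset.prod_congr rfl fun r _ => ?_
      rw [← hB (σ r) r]
      exact (real_sign_mul_abs _).symm
    have heq : (c * (((Equiv.Perm.sign σ : ℤ) : ℝ) * ∏ r, B (σ r) r)) * A.det
        = ((c * (((Equiv.Perm.sign σ : ℤ) : ℝ) * ∏ r, H' (σ r) r)) * A.det)
          * ∏ r, |B (σ r) r| := by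
      rw [habs]; ring
    rw [heq]
    exact mul_pos h1 (Finset.prod_pos fun r _ => abs_pos.mpr (hBne r))
  -- sum up
  have hsum : 0 < (c * B.det) * A.det := by
    rw [Matrix.det_apply' B]
    have hrw : (c * (∑ σ : Equiv.Perm (Fin n),
        ((Equiv.Perm.sign σ : ℤ) : ℝ) * ∏ r, B (σ r) r)) * A.det
        = ∑ σ : Equiv.Perm (Fin n),
          (c * (((Equiv.Perm.sign σ : ℤ) : ℝ) * ∏ r, B (σ r) r)) * A.det := by
      rw [Finset.mul_sum, Finset.sum_mul]
    rw [hrw]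
    apply Finset.sum_pos'
    · intro σ _
      by_cases hσ : ∀ r, H' (σ r) r ≠ 0
      · exact le_of_lt (hterm σ hσ)
      · push_neg at hσ
        obtain ⟨r, hr⟩ := hσ
        have hBz : B (σ r) r = 0 :=
          Real.sign_eq_zero_iff.mp ((hB (σ r) r).trans hr)
        have hpz : (∏ r', B (σ r') r') = 0 := Finset.prod_eq_zero (Finset.mem_univ r) hBz
        rw [hpz]
        simp
    · exact ⟨σ₀, Finset.mem_univ σ₀, hterm σ₀ hσ₀⟩
  intro hBz
  rw [hBz, mul_zero, zero_mul] at hsum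
  exact lt_irrefl 0 hsum

end Stmt13Aux

/-- in a sign-nonsingular pattern allowing symplectic pairs, minors at
zero entries are not sign-nonsingular and minors at nonzero entries are. -/
theorem stmt13 {n : ℕ} (H : Matrix (Fin (n+1)) (Fin (n+1)) ℝ)
    (hp : IsSignPattern H) (hsns : IsSignNonsingular H)
    (hsp : AllowsSymplecticPairs H) (i j : Fin (n+1)) :
    (H i j = 0 → ¬ IsSignNonsingular (H.submatrix i.succAbove j.succAbove)) ∧
    (H i j ≠ 0 → IsSignNonsingular (H.submatrix i.succAbove j.succAbove)) := by
  obtain ⟨A, D, hA, hD, hAD⟩ := hsp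
  have hdetA : A.det ≠ 0 := hsns A hA
  have hDeq : D = Aᵀ⁻¹ := (Matrix.inv_eq_right_inv hAD).symm
  have hDij : D i j = A.det⁻¹ *
      ((-1)^((i:ℕ)+(j:ℕ)) * (A.submatrix i.succAbove j.succAbove).det) := by
    rw [hDeq, ← Matrix.transpose_nonsing_inv, Matrix.transpose_apply, Matrix.inv_def,
      Matrix.smul_apply, Matrix.adjugate_fin_succ_eq_det_submatrix, Ring.inverse_eq_inv,
      smul_eq_mul]
  have hsD : Real.sign (D i j) = H i j := hD i j
  have hA' : HasSignPattern (A.submatrix i.succAbove j.succAbove)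
      (H.submatrix i.succAbove j.succAbove) := fun k r => hA _ _
  constructor
  · intro h0 hS
    have hD0 : D i j = 0 := Real.sign_eq_zero_iff.mp (hsD.trans h0)
    have h2 : A.det⁻¹ * ((-1:ℝ)^((i:ℕ)+(j:ℕ)) * (A.submatrix i.succAbove j.succAbove).det)
        = 0 := by rw [← hDij]; exact hD0
    have hdet0 : (A.submatrix i.succAbove j.succAbove).det = 0 := by
      rcases mul_eq_zero.mp h2 with h|h
      · exact absurd h (inv_ne_zero hdetA)
      · rcases mul_eq_zero.mp h with h|h
        · exact absurd h (pow_ne_zero _ (by norm_num))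
        · exact h
    exact hS _ hA' hdet0
  · intro hij
    have hDne : D i j ≠ 0 := fun h => hij (by rw [← hsD, h, Real.sign_zero])
    have hdet' : (A.submatrix i.succAbove j.succAbove).det ≠ 0 := by
      intro h0
      apply hDne
      rw [hDij, h0, mul_zero, mul_zero]
    exact minor_sns hp hsns hA i j hij hdet'
end

section
/- Every extended caterpillar on n vertices has indegree sequence and outdegree sequence both equal to {1, 2, 3, …, n-2, n-1, n-1} (in some vertex ordering); consequently any two extended caterpillars on n vertices have the same indegree and outdegree sequences. -/
open Matrix

/-!
Order the vertices along the backbone. A vertex `v` receives an arc from every later vertex and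
from its tree neighbours before it, so its indegree is `n - 1 - v + b v`, where `b v` counts those
neighbours. Away from the first vertex (indegree `n - 1`), `v + 1 - b v` permutes `{1, …, n - 1}`:
inside each blossom it fixes the vertices after the backbone vertex, shifts those before it up by
one, and sends the backbone vertex to the first position of the blossom. Outdegrees follow by
reversing the backbone, which turns an extended caterpillar into another one.
-/

open Finset

noncomputable def inDegrees {α : Type*} [Fintype α] (R : α → α → Prop) : Multiset ℕ :=
  univ.val.map fun v => Nat.card {u // R u v}

noncomputable def outDegrees {α : Type*} [Fintype α] (R : α → α → Prop) : Multiset ℕ :=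
  univ.val.map fun v => Nat.card {u // R v u}

theorem inDegrees_comp_equiv {α β : Type*} [Fintype α] [Fintype β] (e : α ≃ β)
    (R : β → β → Prop) : inDegrees (fun u v => R (e u) (e v)) = inDegrees R := by
  have hcard (v : α) : Nat.card {u // R (e u) (e v)} = Nat.card {w // R w (e v)} :=
    Nat.card_congr (e.subtypeEquiv fun _ => Iff.rfl)
  simp only [inDegrees, hcard]
  rw [← Multiset.map_univ_val_equiv e, Multiset.map_map]
  rfl

theorem Multiset.map_univ_eq_cons_map_range {α : Type*} [Fintype α] [DecidableEq α]
    {f : α → ℕ} (a : α) (hsurj : ∀ i < Fintype.card α - 1, ∃ v ≠ a, f v = i + 1) :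
    univ.val.map f = f a ::ₘ (Multiset.range (Fintype.card α - 1)).map (· + 1) := by
  rw [← Multiset.cons_erase (mem_univ_val a), Multiset.map_cons]
  congr 1
  refine (Multiset.eq_of_le_of_card_le ?_ ?_).symm
  · refine (Multiset.le_iff_subset ((Multiset.nodup_range _).map (add_left_injective 1))).mpr ?_
    intro x hx
    obtain ⟨i, hi, rfl⟩ := Multiset.mem_map.mp hx
    obtain ⟨v, hva, hv⟩ := hsurj i (Multiset.mem_range.mp hi)
    exact hv ▸ Multiset.mem_map_of_mem f ((Multiset.mem_erase_of_ne hva).mpr (mem_univ_val v))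
  · simp [Multiset.card_erase_of_mem]

noncomputable def backDegree {n : ℕ} (T : Fin n → Fin n → Prop) (v : Fin n) : ℕ :=
  Nat.card {u // u < v ∧ T u v}

theorem card_subtype_eq_sub_add_backDegree {n : ℕ} {R T : Fin n → Fin n → Prop}
    (hR : ∀ u v, R u v ↔ v < u ∨ (u < v ∧ T u v)) (v : Fin n) :
    Nat.card {u // R u v} = (n - 1 - v) + backDegree T v := by
  classical
  have hdisj : Disjoint (fun u => v < u) (fun u => u < v ∧ T u v) :=
    disjoint_iff_inf_le.mpr fun u ⟨h₁, h₂, _⟩ => (lt_asymm h₁ h₂).elim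
  have hIoi : Nat.card {u // v < u} = n - 1 - v := by
    rw [← Fin.card_Ioi, ← Nat.card_eq_finsetCard]; simp
  rw [backDegree, ← hIoi, ← Nat.card_sum, ← Nat.card_congr (subtypeOrEquiv _ _ hdisj)]
  exact Nat.card_congr (Equiv.subtypeEquivRight (hR · v))

theorem backDegree_eq_zero_of_val_eq_zero {n : ℕ} (T : Fin n → Fin n → Prop) {v : Fin n}
    (hv : (v : ℕ) = 0) : backDegree T v = 0 := by
  have : IsEmpty {u // u < v ∧ T u v} := ⟨fun ⟨u, hu, _⟩ => by rw [Fin.lt_def] at hu; omega⟩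
  exact Nat.card_of_isEmpty

structure IsCaterpillarLayout {n : ℕ} (k : ℕ) (pos : Fin n → ℕ) (bb : ℕ → Fin n) : Prop where
  monotone : Monotone pos
  pos_lt : ∀ v, pos v < k
  pos_bb : ∀ j < k, pos (bb j) = j
  eq_bb_zero : ∀ v, pos v = 0 → v = bb 0
  eq_bb_last : ∀ v, pos v = k - 1 → v = bb (k - 1)

theorem isExtendedCaterpillar_iff {n : ℕ} {R : Fin n → Fin n → Prop} :
    IsExtendedCaterpillar R ↔ ∃ k pos bb, IsCaterpillarLayout k pos bb ∧
      ∀ u v, R u v ↔ v < u ∨ (u < v ∧ CaterpillarTreeEdge pos bb u v) := by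
  constructor
  · rintro ⟨k, pos, bb, -, hmono, hlt, hbb, h0, hlast, hR⟩
    exact ⟨k, pos, bb, ⟨hmono, hlt, hbb, h0, hlast⟩, hR⟩
  · rintro ⟨k, pos, bb, ⟨hmono, hlt, hbb, h0, hlast⟩, hR⟩
    exact ⟨k, pos, bb, (hlt (bb 0)).pos, hmono, hlt, hbb, h0, hlast, hR⟩

theorem caterpillarTreeEdge_comm {n : ℕ} {pos : Fin n → ℕ} {bb : ℕ → Fin n} {u v : Fin n} :
    CaterpillarTreeEdge pos bb u v ↔ CaterpillarTreeEdge pos bb v u := by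
  unfold CaterpillarTreeEdge
  grind

def blossomStart {n : ℕ} (pos : Fin n → ℕ) (j : ℕ) : ℕ := #{u | pos u < j}

theorem lt_blossomStart_iff {n : ℕ} {pos : Fin n → ℕ} (hpos : Monotone pos) {j : ℕ}
    {v : Fin n} : (v : ℕ) < blossomStart pos j ↔ pos v < j := by
  constructor
  · intro hv
    by_contra! hj
    have hsub : ({u | pos u < j} : Finset _) ⊆ Iio v := fun u hu => by
      simp only [mem_filter, mem_univ, true_and] at hu
      exact mem_Iio.mpr (hpos.reflect_lt (hu.trans_le hj))
    have := card_le_card hsub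
    rw [Fin.card_Iio] at this
    exact absurd hv (not_lt.mpr this)
  · intro hv
    have hsub : Iic v ⊆ ({u | pos u < j} : Finset _) := fun u hu =>
      mem_filter.mpr ⟨mem_univ u, (hpos (mem_Iic.mp hu)).trans_lt hv⟩
    have := card_le_card hsub
    rw [Fin.card_Iic] at this
    exact this

namespace IsCaterpillarLayout

variable {n k : ℕ} {pos : Fin n → ℕ} {bb : ℕ → Fin n}

theorem pos_bb_pos (L : IsCaterpillarLayout k pos bb) (v : Fin n) : pos (bb (pos v)) = pos v :=
  L.pos_bb _ (L.pos_lt v)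

theorem pos_bb_zero (L : IsCaterpillarLayout k pos bb) : pos (bb 0) = 0 :=
  L.pos_bb 0 (L.pos_lt (bb 0)).pos

theorem val_bb_zero (L : IsCaterpillarLayout k pos bb) : (bb 0 : ℕ) = 0 := by
  have hle : pos ⟨0, (bb 0).pos⟩ ≤ pos (bb 0) := L.monotone (Nat.zero_le _)
  rw [← L.eq_bb_zero ⟨0, (bb 0).pos⟩ (by have := L.pos_bb_zero; omega)]

theorem backDegree_of_ne_bb (L : IsCaterpillarLayout k pos bb) {v : Fin n}
    (hv : v ≠ bb (pos v)) :
    backDegree (CaterpillarTreeEdge pos bb) v = if bb (pos v) < v then 1 else 0 := by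
  have hiff (u : Fin n) :
      (u < v ∧ CaterpillarTreeEdge pos bb u v) ↔ (u = bb (pos v) ∧ bb (pos v) < v) := by
    constructor
    · rintro ⟨huv, -, ⟨-, hv', -⟩ | ⟨hpos, hu | hv'⟩⟩
      · exact absurd hv' hv
      · rw [hpos] at hu; exact ⟨hu, hu ▸ huv⟩
      · exact absurd hv' hv
    · rintro ⟨rfl, hlt⟩
      exact ⟨hlt, hlt.ne, Or.inr ⟨L.pos_bb_pos v, Or.inl (by rw [L.pos_bb_pos v])⟩⟩
  rw [backDegree, Nat.card_congr (Equiv.subtypeEquivRight hiff)]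
  split_ifs with hlt <;> simp [hlt]

theorem backDegree_bb_add_blossomStart (L : IsCaterpillarLayout k pos bb) {j : ℕ} (hj : 0 < j)
    (hjk : j < k) :
    backDegree (CaterpillarTreeEdge pos bb) (bb j) + blossomStart pos j = bb j + 1 := by
  classical
  have hposj : pos (bb j) = j := L.pos_bb j hjk
  have hprev : pos (bb (j - 1)) = j - 1 := L.pos_bb _ (by omega)
  set blossom := (Iio (bb j)).filter (pos · = j)
  have hiff (u : Fin n) : (u < bb j ∧ CaterpillarTreeEdge pos bb u (bb j)) ↔
      u ∈ insert (bb (j - 1)) blossom := by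
    simp only [blossom, mem_insert, mem_filter, mem_Iio]
    constructor
    · rintro ⟨hlt, -, ⟨hu, -, hp | hp⟩ | ⟨hp, -⟩⟩
      · exact Or.inl (by rw [hu]; congr 1; omega)
      · have := L.monotone hlt.le; omega
      · exact Or.inr ⟨hlt, by omega⟩
    · rintro (rfl | ⟨hlt, hp⟩)
      · have hlt : bb (j - 1) < bb j := L.monotone.reflect_lt (by omega)
        exact ⟨hlt, hlt.ne, Or.inl ⟨by rw [hprev], by rw [hposj], by omega⟩⟩
      · exact ⟨hlt, hlt.ne, Or.inr ⟨by omega, Or.inr (by rw [hposj])⟩⟩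
  have hstart : blossomStart pos j = #((Iio (bb j)).filter fun u => ¬ pos u = j) := by
    refine congrArg card (ext fun u => ?_)
    simp only [mem_filter, mem_univ, true_and, mem_Iio]
    refine ⟨fun hu => ⟨L.monotone.reflect_lt (by omega), hu.ne⟩, fun ⟨hlt, hne⟩ => ?_⟩
    have := L.monotone hlt.le
    omega
  have hprev_notMem : bb (j - 1) ∉ blossom := by simp only [blossom, mem_filter, mem_Iio, hprev, not_and]; omega
  rw [backDegree, Nat.card_congr (Equiv.subtypeEquivRight hiff), Nat.card_eq_finsetCard,
    card_insert_of_notMem hprev_notMem, hstart, add_right_comm, card_filter_add_card_filter_not,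
    Fin.card_Iio]

theorem exists_backDegree_add_eq (L : IsCaterpillarLayout k pos bb) {x : ℕ} (hx : 0 < x)
    (hxn : x < n) : ∃ v ≠ bb 0, backDegree (CaterpillarTreeEdge pos bb) v + x = v + 1 := by
  set w : Fin n := ⟨x, hxn⟩
  set j := pos w
  have hj : 0 < j := Nat.pos_of_ne_zero fun hj0 => by
    have := congrArg Fin.val (L.eq_bb_zero w hj0)
    simp only [w, L.val_bb_zero] at this
    omega
  have hpos_ne {v : Fin n} (hv : pos v = j) : v ≠ bb 0 := fun h => by
    rw [h, L.pos_bb_zero] at hv; omega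
  have hstart : blossomStart pos j ≤ x := not_lt.mp fun h =>
    lt_irrefl j ((lt_blossomStart_iff (v := w) L.monotone).mp h)
  rcases hstart.eq_or_lt with hx_eq | hx_gt
  · exact ⟨bb j, hpos_ne (L.pos_bb j (L.pos_lt w)),
      hx_eq ▸ L.backDegree_bb_add_blossomStart hj (L.pos_lt w)⟩
  rcases le_or_gt x (bb j) with hx_le | hb_lt
  · set v : Fin n := ⟨x - 1, by omega⟩
    have hv : pos v = j := by
      refine le_antisymm (L.monotone (show v ≤ w from Nat.sub_le x 1)) (not_lt.mp fun h => ?_)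
      have := (lt_blossomStart_iff L.monotone).mpr h
      simp only [v] at this
      omega
    have hvb : v < bb (pos v) := by rw [hv]; exact Fin.lt_def.mpr (by simp only [v]; omega)
    refine ⟨v, hpos_ne hv, ?_⟩
    rw [L.backDegree_of_ne_bb hvb.ne, if_neg (lt_asymm hvb), zero_add]
    simp only [v]; omega
  · have hwb : bb (pos w) < w := hb_lt
    refine ⟨w, hpos_ne rfl, ?_⟩
    rw [L.backDegree_of_ne_bb hwb.ne', if_pos hwb]
    simp only [w]; omega

theorem rev (L : IsCaterpillarLayout k pos bb) :
    IsCaterpillarLayout k (fun v => k - 1 - pos v.rev) (fun j => (bb (k - 1 - j)).rev) where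
  monotone _ _ huv := Nat.sub_le_sub_left (L.monotone (Fin.rev_le_rev.mpr huv)) _
  pos_lt v := by have := L.pos_lt v.rev; omega
  pos_bb j hj := by simp only [Fin.rev_rev]; rw [L.pos_bb _ (by omega)]; omega
  eq_bb_zero v hv := by
    have := L.pos_lt v.rev
    rw [Nat.sub_zero, ← L.eq_bb_last v.rev (by omega), Fin.rev_rev]
  eq_bb_last v hv := by
    have := L.pos_lt v.rev
    rw [Nat.sub_self, ← L.eq_bb_zero v.rev (by omega), Fin.rev_rev]

theorem caterpillarTreeEdge_rev (L : IsCaterpillarLayout k pos bb) (u v : Fin n) :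
    CaterpillarTreeEdge (fun v => k - 1 - pos v.rev) (fun j => (bb (k - 1 - j)).rev) u v ↔
      CaterpillarTreeEdge pos bb u.rev v.rev := by
  have hbb (w : Fin n) :
      w = (bb (k - 1 - (k - 1 - pos w.rev))).rev ↔ w.rev = bb (pos w.rev) := by
    rw [Nat.sub_sub_self (by have := L.pos_lt w.rev; omega), Fin.rev_eq_iff]
  have hu := L.pos_lt u.rev
  have hv := L.pos_lt v.rev
  have hsucc : k - 1 - pos v.rev = k - 1 - pos u.rev + 1 ↔ pos u.rev = pos v.rev + 1 := by omega
  have hsucc' : k - 1 - pos u.rev = k - 1 - pos v.rev + 1 ↔ pos v.rev = pos u.rev + 1 := by omega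
  have heq : k - 1 - pos u.rev = k - 1 - pos v.rev ↔ pos u.rev = pos v.rev := by omega
  simp only [CaterpillarTreeEdge, hbb, hsucc, hsucc', heq, ne_eq, Fin.rev_inj]
  tauto

end IsCaterpillarLayout

theorem IsExtendedCaterpillar.inDegrees_eq {n : ℕ} {R : Fin n → Fin n → Prop}
    (h : IsExtendedCaterpillar R) :
    inDegrees R = (n - 1) ::ₘ (Multiset.range (n - 1)).map (· + 1) := by
  obtain ⟨k, pos, bb, L, hR⟩ := isExtendedCaterpillar_iff.mp h
  have hdeg := card_subtype_eq_sub_add_backDegree hR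
  have hfirst : Nat.card {u // R u (bb 0)} = n - 1 := by
    rw [hdeg, backDegree_eq_zero_of_val_eq_zero _ L.val_bb_zero, L.val_bb_zero, Nat.sub_zero,
      add_zero]
  rw [inDegrees, Multiset.map_univ_eq_cons_map_range (bb 0) ?_, hfirst, Fintype.card_fin]
  intro i hi
  rw [Fintype.card_fin] at hi
  obtain ⟨v, hv, hback⟩ := L.exists_backDegree_add_eq (x := n - 1 - i) (by omega) (by omega)
  exact ⟨v, hv, by rw [hdeg]; omega⟩

theorem IsExtendedCaterpillar.rev {n : ℕ} {R : Fin n → Fin n → Prop}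
    (h : IsExtendedCaterpillar R) : IsExtendedCaterpillar fun u v => R v.rev u.rev := by
  obtain ⟨k, pos, bb, L, hR⟩ := isExtendedCaterpillar_iff.mp h
  refine isExtendedCaterpillar_iff.mpr ⟨_, _, _, L.rev, fun u v => ?_⟩
  rw [hR, Fin.rev_lt_rev, Fin.rev_lt_rev, L.caterpillarTreeEdge_rev, caterpillarTreeEdge_comm]

theorem IsExtendedCaterpillar.outDegrees_eq {n : ℕ} {R : Fin n → Fin n → Prop}
    (h : IsExtendedCaterpillar R) :
    outDegrees R = (n - 1) ::ₘ (Multiset.range (n - 1)).map (· + 1) := by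
  change inDegrees (flip R) = _
  rw [← inDegrees_comp_equiv Fin.revPerm]
  exact h.rev.inDegrees_eq

theorem stmt16_general {n : ℕ} (R : Fin n → Fin n → Prop)
    (h : IsExtendedCaterpillar R) :
    ((Finset.univ.val.map fun v : Fin n => Nat.card {u : Fin n // R u v}) =
        (n - 1) ::ₘ (Multiset.range (n - 1)).map (· + 1) ∧
      (Finset.univ.val.map fun v : Fin n => Nat.card {u : Fin n // R v u}) =
        (n - 1) ::ₘ (Multiset.range (n - 1)).map (· + 1)) ∧
    ∀ R' : Fin n → Fin n → Prop, IsExtendedCaterpillar R' →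
      ((Finset.univ.val.map fun v : Fin n => Nat.card {u : Fin n // R u v}) =
          (Finset.univ.val.map fun v : Fin n => Nat.card {u : Fin n // R' u v}) ∧
        (Finset.univ.val.map fun v : Fin n => Nat.card {u : Fin n // R v u}) =
          (Finset.univ.val.map fun v : Fin n => Nat.card {u : Fin n // R' v u})) :=
  ⟨⟨h.inDegrees_eq, h.outDegrees_eq⟩, fun _ h' =>
    ⟨h.inDegrees_eq.trans h'.inDegrees_eq.symm, h.outDegrees_eq.trans h'.outDegrees_eq.symm⟩⟩

/-- every extended caterpillar on n vertices has indegree and outdegree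
multiset {1, 2, …, n-2, n-1, n-1}; hence any two extended caterpillars on n vertices
have the same indegree and outdegree sequences. -/
theorem stmt16 {n : ℕ} (hn : 1 ≤ n) (R : Fin n → Fin n → Prop)
    (h : IsExtendedCaterpillar R) :
    ((Finset.univ.val.map fun v : Fin n => Nat.card {u : Fin n // R u v}) =
        (n - 1) ::ₘ (Multiset.range (n - 1)).map (· + 1) ∧
      (Finset.univ.val.map fun v : Fin n => Nat.card {u : Fin n // R v u}) =
        (n - 1) ::ₘ (Multiset.range (n - 1)).map (· + 1)) ∧
    ∀ R' : Fin n → Fin n → Prop, IsExtendedCaterpillar R' →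
      ((Finset.univ.val.map fun v : Fin n => Nat.card {u : Fin n // R u v}) =
          (Finset.univ.val.map fun v : Fin n => Nat.card {u : Fin n // R' u v}) ∧
        (Finset.univ.val.map fun v : Fin n => Nat.card {u : Fin n // R v u}) =
          (Finset.univ.val.map fun v : Fin n => Nat.card {u : Fin n // R' v u})) :=
  stmt16_general R h
end

section
/- Let G be a C_4-cockade that properly contains C_4 (i.e., G is built from C_4 by at least one attachment step). Then the symmetric digraph G* contains two distinct vertices u', u'' that both dominate a common vertex u, such that the sets of out-neighbors of u' and u'' share only that structure making Proposition 3.1 fail; consequently no negative-diagonal sign pattern with digraph G* allows symplectic pairs. -/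
open Matrix

lemma cockade_two_nbrs {V : Type} {G : SimpleGraph V} (hc : IsC4Cockade V G) :
    ∀ x : V, ∃ w w', G.Adj x w ∧ G.Adj x w' ∧ w ≠ w' := by
  induction hc with
  | base =>
    have adj : ∀ a b : Fin 4, a ≠ b → (b = a + 1 ∨ a = b + 1) →
        (SimpleGraph.fromRel (fun u v : Fin 4 => v = u + 1)).Adj a b := by
      intro a b h hr; rw [SimpleGraph.fromRel_adj]; exact ⟨h, hr⟩
    intro x
    fin_cases x
    · exact ⟨1, 3, adj 0 1 (by decide) (by decide), adj 0 3 (by decide) (by decide), by decide⟩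
    · exact ⟨0, 2, adj 1 0 (by decide) (by decide), adj 1 2 (by decide) (by decide), by decide⟩
    · exact ⟨1, 3, adj 2 1 (by decide) (by decide), adj 2 3 (by decide) (by decide), by decide⟩
    · exact ⟨0, 2, adj 3 0 (by decide) (by decide), adj 3 2 (by decide) (by decide), by decide⟩
  | attach u v huv h ih =>
    intro x
    match x with
    | Sum.inl a =>
      obtain ⟨w, w', h1, h2, h3⟩ := ih a
      refine ⟨Sum.inl w, Sum.inl w', ?_, ?_, by simp [h3]⟩
      · simp only [SimpleGraph.fromRel_adj]
        exact ⟨by simp [h1.ne], Or.inl (Or.inl ⟨a, w, rfl, rfl, h1⟩)⟩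
      · simp only [SimpleGraph.fromRel_adj]
        exact ⟨by simp [h2.ne], Or.inl (Or.inl ⟨a, w', rfl, rfl, h2⟩)⟩
    | Sum.inr 0 =>
      refine ⟨Sum.inl u, Sum.inr 1, ?_, ?_, by simp⟩
      · simp [SimpleGraph.fromRel_adj]
      · simp [SimpleGraph.fromRel_adj]
    | Sum.inr 1 =>
      refine ⟨Sum.inr 0, Sum.inl v, ?_, ?_, by simp⟩
      · simp [SimpleGraph.fromRel_adj]
      · simp [SimpleGraph.fromRel_adj]

lemma cockade_structure {V : Type} (G : SimpleGraph V)
    (hc : IsC4Cockade V G) (hproper : 4 < Nat.card V) :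
    ∃ u u' u'' : V, u' ≠ u'' ∧ G.Adj u' u ∧ G.Adj u'' u ∧
      ∀ x, ((G.Adj u' x ∨ x = u') ∧ (G.Adj u'' x ∨ x = u'')) ↔ x = u := by
  cases hc with
  | base => simp [Nat.card_eq_fintype_card] at hproper
  | @attach V₀ G₀ u v huv h =>
    obtain ⟨w₁, w₂, hw1, hw2, hww⟩ := cockade_two_nbrs h u
    obtain ⟨w, hw, hwv⟩ : ∃ w, G₀.Adj u w ∧ w ≠ v := by
      by_cases h1 : w₁ = v
      · exact ⟨w₂, hw2, by rw [← h1]; exact hww.symm⟩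
      · exact ⟨w₁, hw1, h1⟩
    refine ⟨Sum.inl u, Sum.inl w, Sum.inr 0, by simp, ?_, ?_, ?_⟩
    · rw [SimpleGraph.fromRel_adj]
      exact ⟨by simp [hw.ne'], Or.inl (Or.inl ⟨w, u, rfl, rfl, hw.symm⟩)⟩
    · rw [SimpleGraph.fromRel_adj]
      exact ⟨by simp, Or.inr (Or.inr (Or.inl ⟨rfl, rfl⟩))⟩
    · intro x
      constructor
      · rintro ⟨hx1, hx2⟩
        rcases x with a | i
        · rcases hx2 with hx2 | hx2
          · rw [SimpleGraph.fromRel_adj] at hx2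
            rcases hx2 with ⟨-, hr | hr⟩
            · rcases hr with ⟨a', b', h1, h2, -⟩ | ⟨h1, h2⟩ | ⟨h1, h2⟩ | ⟨h1, h2⟩ <;>
                simp_all
            · rcases hr with ⟨a', b', h1, h2, -⟩ | ⟨h1, h2⟩ | ⟨h1, h2⟩ | ⟨h1, h2⟩ <;>
                simp_all
          · simp at hx2
        · fin_cases i
          · exfalso
            rcases hx1 with hx1 | hx1
            · rw [SimpleGraph.fromRel_adj] at hx1
              rcases hx1 with ⟨-, hr | hr⟩
              · rcases hr with ⟨a', b', h1, h2, -⟩ | ⟨h1, h2⟩ | ⟨h1, h2⟩ | ⟨h1, h2⟩ <;>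
                  simp_all [hw.ne]
              · rcases hr with ⟨a', b', h1, h2, -⟩ | ⟨h1, h2⟩ | ⟨h1, h2⟩ | ⟨h1, h2⟩ <;>
                  simp_all
            · simp at hx1
          · exfalso
            rcases hx1 with hx1 | hx1
            · rw [SimpleGraph.fromRel_adj] at hx1
              rcases hx1 with ⟨-, hr | hr⟩
              · rcases hr with ⟨a', b', h1, h2, -⟩ | ⟨h1, h2⟩ | ⟨h1, h2⟩ | ⟨h1, h2⟩ <;>
                  simp_all
              · rcases hr with ⟨a', b', h1, h2, -⟩ | ⟨h1, h2⟩ | ⟨h1, h2⟩ | ⟨h1, h2⟩ <;>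
                  simp_all
            · simp at hx1
      · rintro rfl
        constructor
        · left; rw [SimpleGraph.fromRel_adj]
          exact ⟨by simp [hw.ne'], Or.inl (Or.inl ⟨w, u, rfl, rfl, hw.symm⟩)⟩
        · left; rw [SimpleGraph.fromRel_adj]
          exact ⟨by simp, Or.inr (Or.inr (Or.inl ⟨rfl, rfl⟩))⟩

lemma prop31_fails {V : Type} [Fintype V] [DecidableEq V] (G : SimpleGraph V)
    (u u' u'' : V) (h1 : G.Adj u' u) (h2 : G.Adj u'' u)
    (hiff : ∀ x, ((G.Adj u' x ∨ x = u') ∧ (G.Adj u'' x ∨ x = u'')) ↔ x = u)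
    (hne : u' ≠ u'')
    (H : Matrix V V ℝ) (hsp : IsSignPattern H) (hneg : NegativeDiagonal H)
    (hpat : PatternDigraph H (fun a b => G.Adj a b)) : ¬ AllowsSymplecticPairs H := by
  rintro ⟨A, D, hA, hD, hAD⟩
  have key : (Aᵀ * D) u' u'' = 0 := by rw [hAD, Matrix.one_apply_ne hne]
  rw [Matrix.mul_apply] at key
  have hsum : ∑ k, Aᵀ u' k * D k u'' = A u u' * D u u'' := by
    apply Finset.sum_eq_single
    · intro b _ hb
      by_contra hz
      rcases mul_ne_zero_iff.mp hz with ⟨hA0, hD0⟩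
      have hHA : H b u' ≠ 0 := by rw [← hA b u']; simpa [Real.sign_eq_zero_iff] using hA0
      have hHD : H b u'' ≠ 0 := by rw [← hD b u'']; simpa [Real.sign_eq_zero_iff] using hD0
      have c1 : G.Adj u' b ∨ b = u' := by
        by_cases h : b = u'
        · exact Or.inr h
        · exact Or.inl ((hpat b u' h).mp hHA).symm
      have c2 : G.Adj u'' b ∨ b = u'' := by
        by_cases h : b = u''
        · exact Or.inr h
        · exact Or.inl ((hpat b u'' h).mp hHD).symm
      exact hb ((hiff b).mp ⟨c1, c2⟩)
    · intro h; exact absurd (Finset.mem_univ u) h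
  rw [hsum] at key
  rcases mul_eq_zero.mp key with h | h
  · have : H u u' = 0 := by rw [← hA u u', h, Real.sign_zero]
    exact ((hpat u u' h1.ne').mpr h1.symm) this
  · have : H u u'' = 0 := by rw [← hD u u'', h, Real.sign_zero]
    exact ((hpat u u'' h2.ne').mpr h2.symm) this

/-- a C₄-cockade properly containing C₄ has two distinct vertices whose
only common out-neighbor in G* (augmented with the negative-diagonal self-loops) is a
single vertex, so Proposition 3.1 fails and no negative-diagonal pattern with digraph
G* allows symplectic pairs. -/
theorem stmt17 {V : Type} [Fintype V] [DecidableEq V] (G : SimpleGraph V)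
    (hc : IsC4Cockade V G) (hproper : 4 < Fintype.card V) :
    (∃ u u' u'' : V, u' ≠ u'' ∧ G.Adj u' u ∧ G.Adj u'' u ∧
      ∀ x, ((G.Adj u' x ∨ x = u') ∧ (G.Adj u'' x ∨ x = u'')) ↔ x = u) ∧
    ∀ H : Matrix V V ℝ, IsSignPattern H → NegativeDiagonal H →
      PatternDigraph H (fun a b => G.Adj a b) → ¬ AllowsSymplecticPairs H := by
  obtain ⟨u, u', u'', hne, h1, h2, hiff⟩ :=
    cockade_structure G hc (by rw [Nat.card_eq_fintype_card]; exact hproper)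
  exact ⟨⟨u, u', u'', hne, h1, h2, hiff⟩,
    fun H hsp hneg hpat => prop31_fails G u u' u'' h1 h2 hiff hne H hsp hneg hpat⟩
end

section
/- Let G be a 2-connected undirected graph whose symmetric digraph G* is noneven, and let C be a reduced cycle in G of length p ≥ 6. Then no two vertices u, v of C at distance 2 on C have a common neighbor outside C. -/
open Matrix

/-!
Write `x` for the middle vertex of `u, x, v` on `C` and `y` for a common neighbour of `u` and
`v` off `C`. Then `u` and `v` are joined by three internally disjoint paths: `u x v`, `u y v`,
and the rest `r` of `C`. In `G*` the directed cycles `u x v r⁻¹`, `u y v r⁻¹`, `u x v y u`,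
`u y u` and `v y v` use every arc an even number of times in total, so under any weighting
their weights sum to `0`; but there are five of them, so they cannot all be odd.
-/

namespace SimpleGraph.Walk
variable {V : Type*} {G : SimpleGraph V}

def arcWeight {M : Type*} [AddCommMonoid M] (f : V → V → M) {u v : V} (p : G.Walk u v) : M :=
  (p.darts.map fun d => f d.fst d.snd).sum

section
variable {M : Type*} [AddCommMonoid M] (f : V → V → M)

@[simp] lemma arcWeight_nil (u : V) : (nil : G.Walk u u).arcWeight f = 0 := rfl

@[simp] lemma arcWeight_cons {u v w : V} (h : G.Adj u v) (p : G.Walk v w) :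
    (cons h p).arcWeight f = f u v + p.arcWeight f := by
  simp [arcWeight]

lemma sum_range_getVert_eq_arcWeight {u v : V} (p : G.Walk u v) :
    ∑ i ∈ Finset.range p.length, f (p.getVert i) (p.getVert (i + 1)) = p.arcWeight f := by
  induction p with
  | nil => simp
  | cons h q ih =>
    rw [length_cons, Finset.sum_range_succ', arcWeight_cons, ← ih, add_comm]
    simp only [getVert_cons_succ, getVert_zero]
end

lemma getVert_mod_length {u : V} (p : G.Walk u u) {i : ℕ} (hi : i ≤ p.length) :
    p.getVert (i % p.length) = p.getVert i := by
  rcases hi.lt_or_eq with hi | rfl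
  · rw [Nat.mod_eq_of_lt hi]
  · rw [Nat.mod_self, getVert_zero, getVert_length]

lemma getVert_injOn_of_nodup_support_tail {u : V} {p : G.Walk u u}
    (hp : p.support.tail.Nodup) : Set.InjOn p.getVert {i | i < p.length} := by
  cases p with
  | nil => simp
  | cons h q =>
    have hq : q.IsPath := IsPath.mk' (by simpa using hp)
    have hend : ∀ j ≤ q.length, q.getVert j = u → j = q.length := fun j hj =>
      (hq.getVert_eq_end_iff hj).mp
    rintro (_ | i) hi (_ | j) hj hij <;>
      simp only [Set.mem_ofPred_eq, length_cons, getVert_zero, getVert_cons_succ] at hi hj hij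
    · rfl
    · have := hend j (by omega) hij.symm; omega
    · have := hend i (by omega) hij; omega
    · rw [hq.getVert_injOn (by simp; omega) (by simp; omega) hij]

lemma IsCycle.exists_isPath_of_mem_edges {w x u v : V} {c : G.Walk w w} (hc : c.IsCycle)
    (hux : s(u, x) ∈ c.edges) (hxv : s(x, v) ∈ c.edges) (huv : u ≠ v) :
    ∃ r : G.Walk u v, r.IsPath ∧ x ∉ r.support ∧ r.support ⊆ c.support := by
  classical
  have hx := c.snd_mem_support_of_mem_edges hux
  suffices ∀ d : G.Walk x x, d.IsCycle → s(u, x) ∈ d.edges → s(x, v) ∈ d.edges →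
      ∃ r : G.Walk u v, r.IsPath ∧ x ∉ r.support ∧ r.support ⊆ d.support by
    have hrot := c.rotate_edges x hx
    obtain ⟨r, hr, hxr, hrd⟩ :=
      this _ (hc.rotate hx) (hrot.mem_iff.mpr hux) (hrot.mem_iff.mpr hxv)
    exact ⟨r, hr, hxr, fun z hz => (c.mem_support_rotate_iff x hx).mp (hrd hz)⟩
  intro d hd hux hxv
  cases d with
  | nil => exact absurd hd not_isCycle_nil
  | @cons _ a _ h q =>
    obtain ⟨hq, -⟩ := (cons_isCycle_iff q h).mp hd
    obtain ⟨p, rfl⟩ : ∃ p : G.Walk x a, q = p.reverse := ⟨q.reverse, by simp⟩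
    cases p with
    | nil => exact absurd rfl h.ne
    | @cons _ b _ h' r =>
      obtain ⟨hr, hxr⟩ := (cons_isPath_iff h' r).mp ((isPath_reverse_iff _).mp hq)
      have hnbr : ∀ z, s(z, x) ∈ (cons h (cons h' r).reverse).edges → z = a ∨ z = b := by
        intro z hz
        simp only [edges_cons, edges_reverse, List.mem_cons, List.mem_reverse] at hz
        rcases hz with hz | hz | hz
        · exact Or.inl (Sym2.congr_right.mp (Sym2.eq_swap.trans hz))
        · exact Or.inr (Sym2.congr_right.mp (Sym2.eq_swap.trans hz))
        · exact absurd (r.snd_mem_support_of_mem_edges hz) hxr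
      have hsub : r.support ⊆ (cons h (cons h' r).reverse).support := fun z hz => by
        simp [hz]
      rcases hnbr u hux with rfl | rfl <;> rcases hnbr v (Sym2.eq_swap ▸ hxv) with rfl | rfl
      · exact absurd rfl huv
      · exact ⟨r.reverse, hr.reverse, by simpa using hxr, by simpa using hsub⟩
      · exact ⟨r, hr, hxr, hsub⟩
      · exact absurd rfl huv

end SimpleGraph.Walk

open SimpleGraph Walk

def IsOddArcWeighting {V : Type*} (R : V → V → Prop) (w : V → V → ZMod 2) : Prop :=
  ∀ (m : ℕ) (c : Fin (m + 1) → V), DicycleOn R c → ∑ i, w (c i) (c (i + 1)) = 1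

section Noneven
variable {V : Type*} {G : SimpleGraph V} {w : V → V → ZMod 2}

/-- Unlike `Walk.IsCycle`, the hypothesis on `p` admits the 2-cycles `u → v → u` of `G*`. -/
theorem IsOddArcWeighting.arcWeight_eq_one (hw : IsOddArcWeighting (fun a b => G.Adj a b) w)
    {u : V} (p : G.Walk u u) (hp : p.support.tail.Nodup) (hlen : p.length ≠ 0) :
    p.arcWeight w = 1 := by
  obtain ⟨m, hm⟩ := Nat.exists_eq_add_one_of_ne_zero hlen
  have hsucc : ∀ i : Fin (m + 1), p.getVert ↑(i + 1) = p.getVert (i + 1) := fun i => by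
    have := p.getVert_mod_length (i := i + 1) (by omega)
    rwa [hm, ← Nat.add_mod_mod, ← Fin.val_one', ← Fin.val_add] at this
  have hc : DicycleOn (fun a b => G.Adj a b) fun i : Fin (m + 1) => p.getVert i := by
    refine ⟨fun i j hij => Fin.ext ?_, fun i => ?_⟩
    · exact getVert_injOn_of_nodup_support_tail hp (by simp [hm]; omega) (by simp [hm]; omega)
        hij
    · simpa only [hsucc] using p.adj_getVert_succ (by omega)
  rw [← hw m _ hc, ← sum_range_getVert_eq_arcWeight, hm]
  simp only [hsucc]
  exact (Fin.sum_univ_eq_sum_range (fun i => w (p.getVert i) (p.getVert (i + 1))) _).symm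

theorem not_isNoneven_of_isPath_of_two_common_neighbors {u v x y : V} (r : G.Walk u v)
    (hr : r.IsPath) (huv : u ≠ v) (hxy : x ≠ y) (hxr : x ∉ r.support) (hyr : y ∉ r.support)
    (hux : G.Adj u x) (hxv : G.Adj x v) (huy : G.Adj u y) (hyv : G.Adj y v) :
    ¬ IsNoneven fun a b => G.Adj a b := by
  rintro ⟨w, hw : IsOddArcWeighting _ w⟩
  have h₁ := hw.arcWeight_eq_one (cons hux (cons hxv r.reverse))
    (by simp [hxr, hr.support_nodup]) (by simp)
  have h₂ := hw.arcWeight_eq_one (cons huy (cons hyv r.reverse))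
    (by simp [hyr, hr.support_nodup]) (by simp)
  have h₃ := hw.arcWeight_eq_one (cons hux (cons hxv (cons hyv.symm (cons huy.symm nil))))
    (by simp [hux.ne', hxv.ne, hyv.ne', huy.ne', huv.symm, hxy]) (by simp)
  have h₄ := hw.arcWeight_eq_one (cons huy (cons huy.symm nil)) (by simp [huy.ne']) (by simp)
  have h₅ := hw.arcWeight_eq_one (cons hyv.symm (cons hyv nil)) (by simp [hyv.ne]) (by simp)
  simp only [arcWeight_cons, arcWeight_nil, add_zero] at h₁ h₂ h₃ h₄ h₅
  exact zero_ne_one (by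
    linear_combination (norm := (ring_nf; reduce_mod_char)) h₁ + h₂ + h₃ + h₄ + h₅)

end Noneven

theorem stmt18_general {V : Type} (G : SimpleGraph V)
    (hne : IsNoneven fun u v => G.Adj u v)
    (v₀ : V) (c : G.Walk v₀ v₀) (hc : c.IsCycle)
    (u v x : V) (hux : s(u, x) ∈ c.edges) (hxv : s(x, v) ∈ c.edges) (huv : u ≠ v) :
    ¬ ∃ y, y ∉ c.support ∧ G.Adj u y ∧ G.Adj v y := by
  rintro ⟨y, hy, huy, hvy⟩
  obtain ⟨r, hr, hxr, hrc⟩ := hc.exists_isPath_of_mem_edges hux hxv huv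
  have hxy : x ≠ y := fun h => hy (h ▸ c.snd_mem_support_of_mem_edges hux)
  exact not_isNoneven_of_isPath_of_two_common_neighbors r hr huv hxy hxr (fun h => hy (hrc h))
    (c.adj_of_mem_edges hux) (c.adj_of_mem_edges hxv) huy hvy.symm hne

/-- in a 2-connected graph with noneven G*, two vertices at distance 2
on a reduced cycle of length ≥ 6 have no common neighbor outside the cycle. -/
theorem stmt18 {V : Type} (G : SimpleGraph V) (h2 : GraphTwoConnected G)
    (hne : IsNoneven fun u v => G.Adj u v)
    (v₀ : V) (c : G.Walk v₀ v₀) (hc : c.IsCycle) (hlen : 6 ≤ c.length)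
    (hred : ∀ u w, u ∈ c.support → w ∈ c.support → G.Adj u w → s(u, w) ∈ c.edges)
    (u v x : V) (hux : s(u, x) ∈ c.edges) (hxv : s(x, v) ∈ c.edges) (huv : u ≠ v) :
    ¬ ∃ y, y ∉ c.support ∧ G.Adj u y ∧ G.Adj v y :=
  stmt18_general G hne v₀ c hc u v x hux hxv huv
end
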